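/- arXiv:2011.13348 — 11 statements merged into one kernel-verified Lean document; each statement's English description precedes it below -/
import Mathlib

section
/- Let E be a set and L a system of sign vectors on E. Then L satisfies axioms (C), (FS), (SE=) and (P=asym) if and only if L satisfies axioms (FS), (SE) and (P). In other words, the two covector axiomatizations of affine oriented matroids (for arbitrary ground sets) are equivalent. -/
open Set

variable {E : Type*}

/-- Composition of sign vectors. -/
def sVComp (X Y : E → SignType) : E → SignType := fun e => if X e ≠ 0 then X e else Y e

/-- Separator of two sign vectors. -/
def sVSep (X Y : E → SignType) : Set E := {e | X e ≠ 0 ∧ Y e ≠ 0 ∧ X e ≠ Y e}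

/-- Support of a sign vector. -/
def sVSupp (X : E → SignType) : Set E := {e | X e ≠ 0}

/-- Zero set of a sign vector. -/
def sVZero (X : E → SignType) : Set E := {e | X e = 0}

/-- The natural partial order on sign vectors: `X ≤ Y`. -/
def sVLe (X Y : E → SignType) : Prop := ∀ e, X e = 0 ∨ X e = Y e

/-- The sign vector `X ⊕ Y`. -/
def sVOplus (X Y : E → SignType) : E → SignType :=
  fun e => if X e ≠ 0 ∧ Y e ≠ 0 ∧ X e ≠ Y e then 0 else sVComp X Y e

/-- `I_e(X,Y;L)`. -/
def setIe (L : Set (E → SignType)) (X Y : E → SignType) (e : E) : Set (E → SignType) :=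
  {Z | Z ∈ L ∧ Z e = 0 ∧ ∀ f ∉ sVSep X Y, Z f = sVComp X Y f}

/-- `I(X,Y;L)`. -/
def setI (L : Set (E → SignType)) (X Y : E → SignType) : Set (E → SignType) :=
  ⋃ e ∈ sVSep X Y, setIe L X Y e

/-- `I^=_e(X,Y;L)`. -/
def setIeEq (L : Set (E → SignType)) (X Y : E → SignType) (e : E) : Set (E → SignType) :=
  {Z | Z ∈ L ∧ Z e = 0 ∧ ∀ f ∉ sVSep X Y, Z f = X f}

/-- `I^=(X,Y;L)`. -/
def setIEq (L : Set (E → SignType)) (X Y : E → SignType) : Set (E → SignType) :=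
  ⋃ e ∈ sVSep X Y, setIeEq L X Y e

/-- `Asym(L)`. -/
def asymPart (L : Set (E → SignType)) : Set (E → SignType) := {X | X ∈ L ∧ -X ∉ L}

/-- `P(L)`. -/
def setP (L : Set (E → SignType)) : Set (E → SignType) :=
  {W | ∃ X ∈ L, ∃ Y ∈ L, setI L X (-Y) = ∅ ∧ setI L (-X) Y = ∅ ∧ W = sVOplus X (-Y)}

/-- `P^=_asym(L)`. -/
def setPEqAsym (L : Set (E → SignType)) : Set (E → SignType) :=
  {W | ∃ X ∈ asymPart L, ∃ Y ∈ asymPart L, sVSupp X = sVSupp Y ∧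
    setIEq L X (-Y) = ∅ ∧ setIEq L (-X) Y = ∅ ∧ W = sVOplus X (-Y)}

/-- Axiom (C): composition. -/
def axC (L : Set (E → SignType)) : Prop := ∀ X ∈ L, ∀ Y ∈ L, sVComp X Y ∈ L

/-- Axiom (FS): face symmetry. -/
def axFS (L : Set (E → SignType)) : Prop := ∀ X ∈ L, ∀ Y ∈ L, sVComp X (-Y) ∈ L

/-- Axiom (SE): strong elimination. -/
def axSE (L : Set (E → SignType)) : Prop :=
  ∀ X ∈ L, ∀ Y ∈ L, ∀ e ∈ sVSep X Y, (setIe L X Y e).Nonempty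

/-- Axiom (SE=). -/
def axSEeq (L : Set (E → SignType)) : Prop :=
  ∀ X ∈ L, ∀ Y ∈ L, sVSupp X = sVSupp Y → ∀ e ∈ sVSep X Y, (setIeEq L X Y e).Nonempty

/-- Axiom (P). -/
def axP (L : Set (E → SignType)) : Prop := ∀ W ∈ setP L, ∀ Y ∈ L, sVComp W Y ∈ L

/-- Axiom (P=asym). -/
def axPEqAsym (L : Set (E → SignType)) : Prop :=
  ∀ W ∈ setPEqAsym L, ∀ Y ∈ L, sVComp W Y ∈ L

/-- Affine oriented matroid. -/
def isAOM (L : Set (E → SignType)) : Prop := axFS L ∧ axSE L ∧ axP L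

/-- Axiom (S): finite separators. -/
def axS (L : Set (E → SignType)) : Prop := ∀ X ∈ L, ∀ Y ∈ L, (sVSep X Y).Finite

/-- Axiom (Z): finite zero sets. -/
def axZ (L : Set (E → SignType)) : Prop := ∀ X ∈ L, (sVZero X).Finite

/-- Axiom (I): finite intervals. -/
def axI (L : Set (E → SignType)) : Prop := ∀ X ∈ L, {Y ∈ L | sVLe Y X}.Finite

/-- Finitary affine oriented matroid. -/
def isFAOM (L : Set (E → SignType)) : Prop := isAOM L ∧ axS L ∧ axZ L ∧ axI L

/-- Parallelism of elements. -/
def parallel (L : Set (E → SignType)) (e f : E) : Prop :=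
  ¬ ∃ X ∈ L, X e = 0 ∧ X f = 0

/-- Simplicity: no redundant and no equivalent elements. -/
def isSimple (L : Set (E → SignType)) : Prop :=
  (∀ e : E, ∃ X ∈ L, ∃ Y ∈ L, X e ≠ Y e) ∧
  (∀ e f : E, e ≠ f → (∃ X ∈ L, X e ≠ X f) ∧ (∃ Y ∈ L, Y e ≠ -(Y f)))

/-- Parallelism class of an element. -/
def parClass (L : Set (E → SignType)) (e : E) : Set E := {e} ∪ {f | parallel L f e}

/-- A parallelism class of `L`. -/
def isParClass (L : Set (E → SignType)) (π : Set E) : Prop := ∃ e : E, π = parClass L e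

/-- The betweenness relation on a parallelism class. -/
def btw (L : Set (E → SignType)) (f g h : E) : Prop :=
  f ≠ g ∧ f ≠ h ∧ g ≠ h ∧
  ∀ X ∈ L, ∀ Z ∈ L, X f = 0 → Z h = 0 → X g = -(Z g)

/-- Reorientation of `L` by `τ`. -/
def reorient (L : Set (E → SignType)) (τ : E → SignType) : Set (E → SignType) :=
  {Y | ∃ X ∈ L, Y = fun e => τ e * X e}

/-- Deletion of `A` from `L`, a system of sign vectors on `E ∖ A`. -/
def deletion (L : Set (E → SignType)) (A : Set E) : Set ((↥(Aᶜ)) → SignType) :=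
  {Y | ∃ X ∈ L, Y = fun e => X e.val}

/-- Contraction of `A` in `L`, a system of sign vectors on `E ∖ A`. -/
def contraction (L : Set (E → SignType)) (A : Set E) : Set ((↥(Aᶜ)) → SignType) :=
  {Y | ∃ X ∈ L, (∀ a ∈ A, X a = 0) ∧ Y = fun e => X e.val}

/-- Restriction of `L` to `A`. -/
def restrictSys (L : Set (E → SignType)) (A : Set E) : Set ((↥A) → SignType) :=
  {Y | ∃ X ∈ L, Y = fun a => X a.val}

/-- The set of topes. -/
def topes (L : Set (E → SignType)) : Set (E → SignType) := {T | T ∈ L ∧ ∀ e, T e ≠ 0}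

/-- Convexity of a set of topes. -/
def convexTopes (L : Set (E → SignType)) (C : Set (E → SignType)) : Prop :=
  C ⊆ topes L ∧
  ∀ T ∈ C, ∀ T'' ∈ C, ∀ T' ∈ topes L, sVSep T T' ∩ sVSep T' T'' = ∅ → T' ∈ C

/-- A chain of the covector poset `(L, ≤)`. -/
def chainIn (L c : Set (E → SignType)) : Prop :=
  c ⊆ L ∧ ∀ X ∈ c, ∀ Y ∈ c, sVLe X Y ∨ sVLe Y X

/-- A maximal chain of the covector poset `(L, ≤)`. -/
def maxChainIn (L c : Set (E → SignType)) : Prop :=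
  chainIn L c ∧ ∀ c', chainIn L c' → c ⊆ c' → c' = c

/-- `le` is a linear order on the subset `π`. -/
def linOrderOn (π : Set E) (le : E → E → Prop) : Prop :=
  (∀ a ∈ π, le a a) ∧ (∀ a ∈ π, ∀ b ∈ π, le a b → le b a → a = b) ∧
  (∀ a ∈ π, ∀ b ∈ π, ∀ c ∈ π, le a b → le b c → le a c) ∧
  (∀ a ∈ π, ∀ b ∈ π, le a b ∨ le b a)

/-- The linear order `le` on `π` is compatible with the betweenness relation. -/
def btwCompat (L : Set (E → SignType)) (π : Set E) (le : E → E → Prop) : Prop :=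
  ∀ a ∈ π, ∀ b ∈ π, ∀ c ∈ π, a ≠ b → a ≠ c → b ≠ c →
    (btw L a b c ↔ ((le a b ∧ a ≠ b) ∧ (le b c ∧ b ≠ c)) ∨
                   ((le c b ∧ c ≠ b) ∧ (le b a ∧ b ≠ a)))


section auxAOM

variable {L : Set (E → SignType)}

lemma neg_sVComp (A B : E → SignType) : -(sVComp A B) = sVComp (-A) (-B) := by
  funext e
  simp only [sVComp, Pi.neg_apply]
  cases A e <;> cases B e <;> decide

lemma sVComp_absorb (X Y : E → SignType) :
    sVComp X (-(sVComp X (-Y))) = sVComp X Y := by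
  funext e
  simp only [sVComp, Pi.neg_apply]
  cases X e <;> cases Y e <;> decide

lemma sVSep_neg (A B : E → SignType) : sVSep (-A) (-B) = sVSep A B := by
  ext e
  simp only [sVSep, mem_setOf_eq, Pi.neg_apply]
  cases A e <;> cases B e <;> decide

lemma sVSupp_neg (A : E → SignType) : sVSupp (-A) = sVSupp A := by
  ext e
  simp only [sVSupp, mem_setOf_eq, Pi.neg_apply]
  cases A e <;> decide

lemma sVSep_comp_comm (U V : E → SignType) :
    sVSep (sVComp U V) (sVComp V U) = sVSep U V := by
  ext e
  simp only [sVSep, sVComp, mem_setOf_eq]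
  cases U e <;> cases V e <;> decide

lemma sVSupp_comp_comm (U V : E → SignType) :
    sVSupp (sVComp U V) = sVSupp (sVComp V U) := by
  ext e
  simp only [sVSupp, sVComp, mem_setOf_eq]
  cases U e <;> cases V e <;> decide

lemma sVOplus_comp_comm (U V : E → SignType) :
    sVOplus (sVComp U V) (sVComp V U) = sVOplus U V := by
  funext e
  simp only [sVOplus, sVComp]
  rcases (show ∀ a : SignType, a = 0 ∨ a = -1 ∨ a = 1 by decide) (U e) with hu | hu | hu <;>
    rcases (show ∀ a : SignType, a = 0 ∨ a = -1 ∨ a = 1 by decide) (V e) with hv | hv | hv <;>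
    simp [hu, hv]

lemma sVComp_eq_left (X Y : E → SignType) (h : sVSupp X = sVSupp Y) (e : E) :
    sVComp X Y e = X e := by
  have hxy : X e ≠ 0 ↔ Y e ≠ 0 := Set.ext_iff.mp h e
  simp only [sVComp]
  by_cases hx : X e = 0
  · have hy : Y e = 0 := by
      by_contra hy
      exact (hxy.mpr hy) hx
    simp [hx, hy]
  · simp [hx]

lemma setIe_eq_setIeEq (L : Set (E → SignType)) (X Y : E → SignType)
    (h : sVSupp X = sVSupp Y) (e : E) : setIe L X Y e = setIeEq L X Y e := by
  unfold setIe setIeEq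
  ext Z
  simp only [mem_setOf_eq]
  constructor <;> rintro ⟨hZ, hZe, hf⟩ <;> refine ⟨hZ, hZe, fun f hfs => ?_⟩
  · rw [hf f hfs, sVComp_eq_left X Y h]
  · rw [hf f hfs, ← sVComp_eq_left X Y h]

lemma setI_eq_setIEq (L : Set (E → SignType)) (X Y : E → SignType)
    (h : sVSupp X = sVSupp Y) : setI L X Y = setIEq L X Y := by
  unfold setI setIEq
  exact iUnion₂_congr fun e _ => setIe_eq_setIeEq L X Y h e

lemma setIeEq_comp_comm (L : Set (E → SignType)) (U V : E → SignType) (e : E) :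
    setIeEq L (sVComp U V) (sVComp V U) e = setIe L U V e := by
  unfold setIeEq setIe
  simp only [sVSep_comp_comm]

lemma setIEq_comp_comm (L : Set (E → SignType)) (U V : E → SignType) :
    setIEq L (sVComp U V) (sVComp V U) = setI L U V := by
  unfold setIEq setI
  simp only [sVSep_comp_comm]
  exact iUnion₂_congr fun e _ => by
    have := setIeEq_comp_comm L U V e
    unfold setIeEq setIe at this ⊢
    simpa using this

lemma sVOplus_eq_comp_of_sep_empty {X Y : E → SignType} (h : sVSep X Y = ∅) :
    sVOplus X Y = sVComp X Y := by
  funext e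
  have he : e ∉ sVSep X Y := by rw [h]; exact notMem_empty e
  simp only [sVSep, mem_setOf_eq] at he
  simp only [sVOplus]
  rw [if_neg he]

lemma axC_of_axFS (hFS : axFS L) : axC L := fun X hX Y hY => by
  have h1 := hFS X hX (sVComp X (-Y)) (hFS X hX Y hY)
  rwa [sVComp_absorb] at h1

lemma axSE_of (hC : axC L) (hSEeq : axSEeq L) : axSE L := by
  intro X hX Y hY e he
  have h1 := hSEeq (sVComp X Y) (hC X hX Y hY) (sVComp Y X) (hC Y hY X hX)
    (sVSupp_comp_comm X Y) e (by rwa [sVSep_comp_comm])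
  rwa [setIeEq_comp_comm] at h1

lemma axSEeq_of (hSE : axSE L) : axSEeq L := by
  intro X hX Y hY hsupp e he
  have h1 := hSE X hX Y hY e he
  rwa [setIe_eq_setIeEq L X Y hsupp] at h1

lemma axPEqAsym_of (hP : axP L) : axPEqAsym L := by
  intro W hW Y' hY'
  obtain ⟨X, hX, Y, hY, hsupp, h1, h2, rfl⟩ := hW
  refine hP _ ⟨X, hX.1, Y, hY.1, ?_, ?_, rfl⟩ Y' hY'
  · rw [setI_eq_setIEq L X (-Y) (by rw [sVSupp_neg]; exact hsupp)]
    exact h1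
  · rw [setI_eq_setIEq L (-X) Y (by rw [sVSupp_neg]; exact hsupp.symm ▸ rfl)]
    exact h2

lemma axP_of (hC : axC L) (hFS : axFS L) (hSEeq : axSEeq L) (hPea : axPEqAsym L) :
    axP L := by
  intro W hW Y' hY'
  obtain ⟨X, hX, Y, hY, hI1, hI2, rfl⟩ := hW
  by_cases hsep : sVSep X (-Y) = ∅
  · rw [sVOplus_eq_comp_of_sep_empty hsep]
    exact hC _ (hFS X hX Y hY) Y' hY'
  · obtain ⟨e₀, he₀⟩ := nonempty_iff_ne_empty.mpr hsep
    have hA : sVComp X (-Y) ∈ L := hFS X hX Y hY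
    have hnegB : -(sVComp (-Y) X) ∈ L := by
      rw [neg_sVComp, neg_neg]
      exact hFS Y hY X hX
    have hBnot : sVComp (-Y) X ∉ L := by
      intro hB
      have h1 := hSEeq _ hA _ hB (sVSupp_comp_comm X (-Y)) e₀ (by rwa [sVSep_comp_comm])
      rw [setIeEq_comp_comm] at h1
      obtain ⟨Z, hZ⟩ := h1
      have hm : Z ∈ setI L X (-Y) := mem_iUnion₂.mpr ⟨e₀, he₀, hZ⟩
      rw [hI1] at hm
      exact hm
    have hsep' : sVSep (-X) Y = sVSep X (-Y) := by
      rw [← sVSep_neg X (-Y), neg_neg]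
    have hnegAnot : -(sVComp X (-Y)) ∉ L := by
      intro hnA
      rw [neg_sVComp, neg_neg] at hnA
      have hnB : sVComp Y (-X) ∈ L := hFS Y hY X hX
      have h1 := hSEeq _ hnA _ hnB (sVSupp_comp_comm (-X) Y) e₀
        (by rw [sVSep_comp_comm, hsep']; exact he₀)
      rw [setIeEq_comp_comm] at h1
      obtain ⟨Z, hZ⟩ := h1
      have hm : Z ∈ setI L (-X) Y := mem_iUnion₂.mpr ⟨e₀, by rw [hsep']; exact he₀, hZ⟩
      rw [hI2] at hm
      exact hm
    have hWmem : sVOplus X (-Y) ∈ setPEqAsym L := by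
      refine ⟨sVComp X (-Y), ⟨hA, hnegAnot⟩, -(sVComp (-Y) X),
        ⟨hnegB, by rw [neg_neg]; exact hBnot⟩, ?_, ?_, ?_, ?_⟩
      · rw [sVSupp_neg]
        exact sVSupp_comp_comm X (-Y)
      · rw [neg_neg, setIEq_comp_comm]
        exact hI1
      · rw [neg_sVComp, neg_sVComp, neg_neg, setIEq_comp_comm]
        exact hI2
      · rw [neg_neg, sVOplus_comp_comm]
    exact hPea _ hWmem Y' hY'

end auxAOM

/-- the two covector axiomatizations of AOMs are equivalent. -/
theorem aom_axiom_equivalence (L : Set (E → SignType)) :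
    (axC L ∧ axFS L ∧ axSEeq L ∧ axPEqAsym L) ↔ (axFS L ∧ axSE L ∧ axP L) := by
  constructor
  · rintro ⟨hC, hFS, hSEeq, hPea⟩
    exact ⟨hFS, axSE_of hC hSEeq, axP_of hC hFS hSEeq hPea⟩
  · rintro ⟨hFS, hSE, hP⟩
    exact ⟨axC_of_axFS hFS, hFS, axSEeq_of hSE, axPEqAsym_of hP⟩
end

section
/- Let E be a set and L a system of sign vectors on E that contains the zero vector and satisfies axioms (FS) and (SE) (i.e., L is the set of covectors of an oriented matroid). Then L also satisfies axiom (P); hence every oriented matroid is an affine oriented matroid. -/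
open Set

variable {E : Type*}

/-- every oriented matroid is an affine oriented matroid. -/
theorem om_is_aom (L : Set (E → SignType)) (h0 : (0 : E → SignType) ∈ L)
    (hFS : axFS L) (hSE : axSE L) : axP L := by
  have hneg : ∀ Y ∈ L, -Y ∈ L := by
    intro Y hY
    have := hFS 0 h0 Y hY
    have hEq : sVComp 0 (-Y) = -Y := by
      funext e; simp [sVComp]
    rwa [hEq] at this
  rintro W ⟨X, hX, Y, hY, hI1, _, rfl⟩ Y' hY'
  have hnY : -Y ∈ L := hneg Y hY
  -- separator of X and -Y is empty
  have hsep : sVSep X (-Y) = ∅ := by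
    by_contra h
    obtain ⟨e, he⟩ := Set.nonempty_iff_ne_empty.mpr h
    obtain ⟨Z, hZ⟩ := hSE X hX (-Y) hnY e he
    have : Z ∈ setI L X (-Y) := by
      exact Set.mem_biUnion he hZ
    rw [hI1] at this
    exact this
  have hW : sVOplus X (-Y) = sVComp X (-Y) := by
    funext e
    have : e ∉ sVSep X (-Y) := by rw [hsep]; exact Set.notMem_empty e
    simp only [sVSep, Set.mem_setOf_eq] at this
    simp only [sVOplus, if_neg this]
  rw [hW]
  have hWL : sVComp X (-Y) ∈ L := hFS X hX Y hY
  have h2 : sVComp (sVComp X (-Y)) Y' = sVComp (sVComp X (-Y)) (-(-Y')) := by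
    rw [neg_neg]
  rw [h2]
  exact hFS _ hWL _ (hneg Y' hY')
end

section
/- Let E be a set, L any system of sign vectors on E, and A ⊆ E. Then P(L/A) ⊆ P(L)/A, where L/A denotes the contraction of A (the set of restrictions to E∖A of those elements of L vanishing on A) and P(L)/A denotes the set of restrictions to E∖A of those elements of P(L) vanishing on A. -/
open Set

variable {E : Type*}

lemma setI_transfer (L : Set (E → SignType)) (A : Set E) (X Y : E → SignType)
    (hXA : ∀ a ∈ A, X a = 0) (hYA : ∀ a ∈ A, Y a = 0)
    (h : setI (contraction L A) (fun e => X e.val) (fun e => Y e.val) = ∅) :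
    setI L X Y = ∅ := by
  by_contra hne
  obtain ⟨Z, hZ⟩ := Set.nonempty_iff_ne_empty.mpr hne
  simp only [setI, Set.mem_iUnion] at hZ
  obtain ⟨e, he, hZmem, hZe, hZf⟩ := hZ
  have heA : e ∈ Aᶜ := fun heA => he.1 (hXA e heA)
  have hZA : ∀ a ∈ A, Z a = 0 := by
    intro a ha
    have hna : a ∉ sVSep X Y := fun hs => hs.1 (hXA a ha)
    rw [hZf a hna]
    simp [sVComp, hXA a ha, hYA a ha]
  have hsep : ∀ f : ↥(Aᶜ), f ∈ sVSep (fun e : ↥(Aᶜ) => X e.val) (fun e => Y e.val) ↔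
      f.val ∈ sVSep X Y := fun f => Iff.rfl
  have : (fun f : ↥(Aᶜ) => Z f.val) ∈
      setI (contraction L A) (fun e => X e.val) (fun e => Y e.val) := by
    simp only [setI, Set.mem_iUnion]
    refine ⟨⟨e, heA⟩, he, ⟨Z, hZmem, hZA, rfl⟩, hZe, ?_⟩
    intro f hf
    have : Z f.val = sVComp X Y f.val := hZf f.val ((hsep f).not.mp hf)
    simpa [sVComp] using this
  rw [h] at this
  exact this

/-- `P(L / A) ⊆ P(L) / A` for any system of sign vectors. -/
theorem setP_contraction_subset (L : Set (E → SignType)) (A : Set E) :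
    setP (contraction L A) ⊆ contraction (setP L) A := by
  rintro W ⟨X', ⟨X, hX, hXA, rfl⟩, Y', ⟨Y, hY, hYA, rfl⟩, h1, h2, rfl⟩
  have hnY : (-(fun e : ↥(Aᶜ) => Y e.val)) = fun e : ↥(Aᶜ) => (-Y) e.val := by
    funext f; simp
  have hnX : (-(fun e : ↥(Aᶜ) => X e.val)) = fun e : ↥(Aᶜ) => (-X) e.val := by
    funext f; simp
  rw [hnY] at h1
  rw [hnX] at h2
  have e1 : setI L X (-Y) = ∅ :=
    setI_transfer L A X (-Y) hXA (fun a ha => by simp [hYA a ha]) h1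
  have e2 : setI L (-X) Y = ∅ :=
    setI_transfer L A (-X) Y (fun a ha => by simp [hXA a ha]) hYA h2
  refine ⟨sVOplus X (-Y), ⟨X, hX, Y, hY, e1, e2, rfl⟩, ?_, ?_⟩
  · intro a ha
    simp [sVOplus, sVComp, hXA a ha, hYA a ha]
  · funext f
    simp [sVOplus, sVComp]
end

section
/- Let E be a set and L a system of sign vectors on E satisfying axioms (FS) and (SE) (i.e., L is a complex of oriented matroids, COM). Then for every A ⊆ E, both the deletion L∖A and the contraction L/A satisfy (FS) and (SE) as systems of sign vectors on E∖A. In other words, COMs (over arbitrary ground sets) are closed under minors. -/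
open Set

variable {E : Type*}

/-- COMs (systems satisfying (FS) and (SE)) are closed under
deletion and contraction. -/
theorem com_minor_closed (L : Set (E → SignType)) (hFS : axFS L) (hSE : axSE L) (A : Set E) :
    (axFS (deletion L A) ∧ axSE (deletion L A)) ∧
    (axFS (contraction L A) ∧ axSE (contraction L A)) := by
  have hcomp : ∀ (X Y : E → SignType) (e : ↥(Aᶜ)),
      sVComp (fun e : ↥(Aᶜ) => X e.val) (fun e : ↥(Aᶜ) => Y e.val) e = sVComp X Y e.val := by
    intro X Y e; rfl
  have hneg : ∀ (Y : E → SignType),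
      (-(fun e : ↥(Aᶜ) => Y e.val)) = fun e : ↥(Aᶜ) => (-Y) e.val := by
    intro Y; rfl
  refine ⟨⟨?_, ?_⟩, ⟨?_, ?_⟩⟩
  · rintro X' ⟨X, hX, rfl⟩ Y' ⟨Y, hY, rfl⟩
    refine ⟨sVComp X (-Y), hFS X hX Y hY, ?_⟩
    funext e; rw [hneg, hcomp]
  · rintro X' ⟨X, hX, rfl⟩ Y' ⟨Y, hY, rfl⟩ e he
    have he' : e.val ∈ sVSep X Y := he
    obtain ⟨Z, hZ, hZe, hZf⟩ := hSE X hX Y hY e.val he'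
    refine ⟨fun f : ↥(Aᶜ) => Z f.val, ⟨Z, hZ, rfl⟩, hZe, ?_⟩
    intro f hf
    rw [hcomp]
    exact hZf f.val hf
  · rintro X' ⟨X, hX, hXA, rfl⟩ Y' ⟨Y, hY, hYA, rfl⟩
    refine ⟨sVComp X (-Y), hFS X hX Y hY, ?_, ?_⟩
    · intro a ha
      simp [sVComp, hXA a ha, hYA a ha]
    · funext e; rw [hneg, hcomp]
  · rintro X' ⟨X, hX, hXA, rfl⟩ Y' ⟨Y, hY, hYA, rfl⟩ e he
    have he' : e.val ∈ sVSep X Y := he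
    obtain ⟨Z, hZ, hZe, hZf⟩ := hSE X hX Y hY e.val he'
    have hZA : ∀ a ∈ A, Z a = 0 := by
      intro a ha
      have hna : a ∉ sVSep X Y := by
        intro ⟨h1, _, _⟩; exact h1 (hXA a ha)
      rw [hZf a hna]
      simp [sVComp, hXA a ha, hYA a ha]
    refine ⟨fun f : ↥(Aᶜ) => Z f.val, ⟨Z, hZ, hZA, rfl⟩, hZe, ?_⟩
    intro f hf
    rw [hcomp]
    exact hZf f.val hf
end

section
/- Let (E,L) be an AOM and e,f ∈ E. Then e ∥ f if and only if for all X,Y ∈ L with X f = 0 and Y f = 0 one has X e = Y e and X e ≠ 0. (In particular, the nonzero sign X e is constant over all covectors X vanishing at f.) -/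
open Set

variable {E : Type*}

/-- characterization of parallelism via constant nonzero signs. -/
theorem parallel_iff_constant_sign (L : Set (E → SignType)) (hL : isAOM L) (e f : E) :
    parallel L e f ↔
      ∀ X ∈ L, ∀ Y ∈ L, X f = 0 → Y f = 0 → X e = Y e ∧ X e ≠ 0 := by
  obtain ⟨hFS, hSE, hP⟩ := hL
  constructor
  · intro hpar X hX Y hY hXf hYf
    have hXe : X e ≠ 0 := fun h => hpar ⟨X, hX, h, hXf⟩
    have hYe : Y e ≠ 0 := fun h => hpar ⟨Y, hY, h, hYf⟩
    refine ⟨?_, hXe⟩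
    by_contra hne
    have he : e ∈ sVSep X Y := ⟨hXe, hYe, hne⟩
    obtain ⟨Z, hZL, hZe, hZ⟩ := hSE X hX Y hY e he
    have hf : f ∉ sVSep X Y := fun ⟨h1, _⟩ => h1 hXf
    have : Z f = 0 := by
      have := hZ f hf
      simp [sVComp, hXf, hYf] at this
      exact this
    exact hpar ⟨Z, hZL, hZe, this⟩
  · rintro h ⟨X, hX, hXe, hXf⟩
    exact (h X hX X hX hXf hXf).2 hXe
end

section
/- Let (E,L) be a simple AOM satisfying axiom (S) (finite separators), let π ⊆ E be a parallelism class, and let ≤' be a linear order on π such that for all pairwise distinct a,b,c ∈ π: [a,b,c] holds iff (a <' b and b <' c) or (c <' b and b <' a). Then (π, ≤') is order-isomorphic to ℤ, to ℕ, to the order dual of ℕ, or to a finite linear order. -/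
open Set

variable {E : Type*}

/-! ### Auxiliary lemmas -/

lemma signType_eq_zero_of_eq_neg : ∀ {s : SignType}, s = -s → s = 0 := by decide

lemma signType_neg_ne : ∀ {s : SignType}, s ≠ 0 → -s ≠ s := by decide

lemma signType_zero_eq_neg : ∀ {s : SignType}, (0 : SignType) = -s → s = 0 := by decide

lemma signType_eq_neg_zero : ∀ {s : SignType}, s = -(0 : SignType) → s = 0 := by decide

/-- In a simple AOM, every element admits a covector vanishing on it. -/
lemma exists_covector_zero (L : Set (E → SignType)) (hL : isAOM L) (hs : isSimple L)
    (e : E) : ∃ X ∈ L, X e = 0 := by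
  obtain ⟨X, hX, Y, hY, hne⟩ := hs.1 e
  by_cases hX0 : X e = 0
  · exact ⟨X, hX, hX0⟩
  by_cases hY0 : Y e = 0
  · exact ⟨Y, hY, hY0⟩
  obtain ⟨Z, hZ⟩ := hL.2.1 X hX Y hY e ⟨hX0, hY0, hne⟩
  exact ⟨Z, hZ.1, hZ.2.1⟩

/-- No covector vanishes on two distinct members of a parallelism class. -/
lemma class_parallel (L : Set (E → SignType)) (hL : isAOM L) (hs : isSimple L)
    (e₀ : E) (le : E → E → Prop) (hlin : linOrderOn (parClass L e₀) le)
    (hcompat : btwCompat L (parClass L e₀) le)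
    {a g : E} (ha : a ∈ parClass L e₀) (hg : g ∈ parClass L e₀) (hag : a ≠ g)
    {X : E → SignType} (hX : X ∈ L) (hXa : X a = 0) (hXg : X g = 0) : False := by
  have he₀ : e₀ ∈ parClass L e₀ := Or.inl rfl
  have haC := ha
  have hgC := hg
  rcases haC with ha' | hpa
  · -- a = e₀
    rcases hgC with hg' | hpg
    · exact hag (ha'.trans hg'.symm)
    · exact hpg ⟨X, hX, hXg, ha' ▸ hXa⟩
  rcases hgC with hg' | hpg
  · exact hpa ⟨X, hX, hXa, hg' ▸ hXg⟩
  -- now a ≠ e₀, g ≠ e₀, parallel L a e₀, parallel L g e₀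
  have hae : a ≠ e₀ := fun h => hpa ⟨X, hX, hXa, h ▸ hXa⟩
  have hge : g ≠ e₀ := fun h => hpg ⟨X, hX, hXg, h ▸ hXg⟩
  obtain ⟨Y, hY, hYe⟩ := exists_covector_zero L hL hs e₀
  have hbtw : ∀ x y z : E, x ∈ parClass L e₀ → y ∈ parClass L e₀ → z ∈ parClass L e₀ →
      x ≠ y → x ≠ z → y ≠ z → le x y → le y z → btw L x y z := by
    intro x y z hx hy hz hxy hxz hyz h1 h2
    exact (hcompat x hx y hy z hz hxy hxz hyz).mpr (Or.inl ⟨⟨h1, hxy⟩, ⟨h2, hyz⟩⟩)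
  have htot := hlin.2.2.2
  rcases htot a ha e₀ he₀ with h1 | h1 <;> rcases htot g hg e₀ he₀ with h2 | h2
  · -- le a e₀, le g e₀ : max of a,g is the middle
    rcases htot a ha g hg with h3 | h3
    · -- le a g ≤ e₀ : g middle, btw a g e₀
      have hb := (hbtw a g e₀ ha hg he₀ hag hae hge h3 h2).2.2.2 X hX Y hY hXa hYe
      rw [hXg] at hb
      exact hpg ⟨Y, hY, signType_zero_eq_neg hb, hYe⟩
    · -- le g a ≤ e₀ : a middle, btw g a e₀
      have hb := (hbtw g a e₀ hg ha he₀ (Ne.symm hag) hge hae h3 h1).2.2.2 X hX Y hY hXg hYe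
      rw [hXa] at hb
      exact hpa ⟨Y, hY, signType_zero_eq_neg hb, hYe⟩
  · -- le a e₀, le e₀ g : e₀ middle, btw a e₀ g
    have hb := (hbtw a e₀ g ha he₀ hg hae hag (Ne.symm hge) h1 h2).2.2.2 X hX X hX hXa hXg
    exact hpa ⟨X, hX, hXa, signType_eq_zero_of_eq_neg hb⟩
  · -- le g e₀, le e₀ a : e₀ middle, btw g e₀ a
    have hb := (hbtw g e₀ a hg he₀ ha hge (Ne.symm hag) (Ne.symm hae) h2 h1).2.2.2
      X hX X hX hXg hXa
    exact hpa ⟨X, hX, hXa, signType_eq_zero_of_eq_neg hb⟩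
  · -- le e₀ a, le e₀ g : min of a,g is the middle
    rcases htot a ha g hg with h3 | h3
    · -- e₀ ≤ a ≤ g : a middle, btw e₀ a g
      have hb := (hbtw e₀ a g he₀ ha hg (Ne.symm hae) (Ne.symm hge) hag h1 h3).2.2.2
        Y hY X hX hYe hXg
      rw [hXa] at hb
      exact hpa ⟨Y, hY, signType_eq_neg_zero hb, hYe⟩
    · -- e₀ ≤ g ≤ a : g middle, btw e₀ g a
      have hb := (hbtw e₀ g a he₀ hg ha (Ne.symm hge) (Ne.symm hae) (Ne.symm hag) h2 h3).2.2.2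
        Y hY X hX hYe hXa
      rw [hXg] at hb
      exact hpg ⟨Y, hY, signType_eq_neg_zero hb, hYe⟩

/-- Classification of infinite linear locally finite orders. -/
lemma classify_llf {α : Type*} [LinearOrder α] [LocallyFiniteOrder α] [Infinite α] :
    (∃ f : α ≃ ℤ, ∀ a b : α, a ≤ b ↔ f a ≤ f b) ∨
    (∃ f : α ≃ ℕ, ∀ a b : α, a ≤ b ↔ f a ≤ f b) ∨
    (∃ f : α ≃ ℕ, ∀ a b : α, a ≤ b ↔ f b ≤ f a) := by
  have : Nonempty α := inferInstance
  letI : SuccOrder α := LinearLocallyFiniteOrder.succOrder α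
  letI : PredOrder α := LinearLocallyFiniteOrder.predOrder α
  by_cases htop : ∃ m : α, ∀ x, x ≤ m
  · by_cases hbot : ∃ m : α, ∀ x, m ≤ x
    · obtain ⟨t, ht⟩ := htop
      obtain ⟨b, hb⟩ := hbot
      have hfin : (Set.univ : Set α).Finite :=
        ((Set.finite_Icc b t)).subset (fun x _ => ⟨hb x, ht x⟩)
      haveI : Finite α := Set.finite_univ_iff.mp hfin
      exact (not_finite α).elim
    · -- top, no bot : dual ℕ
      obtain ⟨t, ht⟩ := htop
      letI : OrderTop α := { top := t, le_top := ht }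
      haveI : NoMinOrder α := by
        push_neg at hbot
        exact ⟨fun a => by obtain ⟨x, hx⟩ := hbot a; exact ⟨x, hx⟩⟩
      let f : αᵒᵈ ≃o ℕ := orderIsoNatOfLinearSuccPredArch
      refine Or.inr (Or.inr ⟨(OrderDual.toDual (α := α)).trans f.toEquiv, fun a b => ?_⟩)
      show a ≤ b ↔ f (OrderDual.toDual b) ≤ f (OrderDual.toDual a)
      rw [f.le_iff_le]
      exact Iff.rfl
  · haveI : NoMaxOrder α := by
      push_neg at htop
      exact ⟨fun a => by obtain ⟨x, hx⟩ := htop a; exact ⟨x, hx⟩⟩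
    by_cases hbot : ∃ m : α, ∀ x, m ≤ x
    · obtain ⟨b, hb⟩ := hbot
      letI : OrderBot α := { bot := b, bot_le := hb }
      let f : α ≃o ℕ := orderIsoNatOfLinearSuccPredArch
      exact Or.inr (Or.inl ⟨f.toEquiv, fun a b => (f.le_iff_le).symm⟩)
    · haveI : NoMinOrder α := by
        push_neg at hbot
        exact ⟨fun a => by obtain ⟨x, hx⟩ := hbot a; exact ⟨x, hx⟩⟩
      let f : α ≃o ℤ := orderIsoIntOfLinearSuccPredArch
      exact Or.inl ⟨f.toEquiv, fun a b => (f.le_iff_le).symm⟩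

/-- order type of a parallelism class under axiom (S):
`ℤ`, `ℕ`, the order dual of `ℕ`, or a finite linear order. -/
theorem parclass_order_type (L : Set (E → SignType)) (hL : isAOM L) (hs : isSimple L)
    (hS : axS L) (π : Set E) (hπ : isParClass L π)
    (le : E → E → Prop) (hlin : linOrderOn π le) (hcompat : btwCompat L π le) :
    (∃ f : ↥π ≃ ℤ, ∀ a b : ↥π, le a.val b.val ↔ f a ≤ f b) ∨
    (∃ f : ↥π ≃ ℕ, ∀ a b : ↥π, le a.val b.val ↔ f a ≤ f b) ∨
    (∃ f : ↥π ≃ ℕ, ∀ a b : ↥π, le a.val b.val ↔ f b ≤ f a) ∨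
    π.Finite := by
  by_cases hfin : π.Finite
  · exact Or.inr (Or.inr (Or.inr hfin))
  obtain ⟨e₀, rfl⟩ := hπ
  letI : LinearOrder ↥(parClass L e₀) :=
    { le := fun a b => le a.1 b.1
      le_refl := fun a => hlin.1 a.1 a.2
      le_trans := fun a b c hab hbc => hlin.2.2.1 a.1 a.2 b.1 b.2 c.1 c.2 hab hbc
      le_antisymm := fun a b hab hba => Subtype.ext (hlin.2.1 a.1 a.2 b.1 b.2 hab hba)
      le_total := fun a b => hlin.2.2.2 a.1 a.2 b.1 b.2
      toDecidableLE := fun a b => Classical.dec _ }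
  haveI : Infinite ↥(parClass L e₀) := Set.infinite_coe_iff.mpr hfin
  have hIcc : ∀ a b : ↥(parClass L e₀), (Set.Icc a b).Finite := by
    intro a b
    obtain ⟨X, hX, hXa⟩ := exists_covector_zero L hL hs a.1
    obtain ⟨Z, hZ, hZb⟩ := exists_covector_zero L hL hs b.1
    have hsub : Set.Icc a b ⊆ Subtype.val ⁻¹' (insert a.1 (insert b.1 (sVSep X Z))) := by
      rintro g ⟨hag, hgb⟩
      simp only [Set.mem_preimage, Set.mem_insert_iff]
      by_cases hga : g = a
      · exact Or.inl (by rw [hga])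
      by_cases hgb' : g = b
      · exact Or.inr (Or.inl (by rw [hgb']))
      have h1 : a.1 ≠ g.1 := fun h => hga (Subtype.ext h.symm)
      have h2 : g.1 ≠ b.1 := fun h => hgb' (Subtype.ext h)
      have hab : a.1 ≠ b.1 := by
        intro h
        have hEq : a = b := Subtype.ext h
        exact hga (le_antisymm (hEq ▸ hgb) hag)
      have hb : btw L a.1 g.1 b.1 :=
        (hcompat a.1 a.2 g.1 g.2 b.1 b.2 h1 hab h2).mpr (Or.inl ⟨⟨hag, h1⟩, ⟨hgb, h2⟩⟩)
      have heq := hb.2.2.2 X hX Z hZ hXa hZb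
      have hXg : X g.1 ≠ 0 := fun h0 =>
        class_parallel L hL hs e₀ le hlin hcompat a.2 g.2 h1 hX hXa h0
      have hZg : Z g.1 ≠ 0 := fun h0 =>
        class_parallel L hL hs e₀ le hlin hcompat b.2 g.2 (Ne.symm h2) hZ hZb h0
      exact Or.inr (Or.inr ⟨hXg, hZg, fun hc => signType_neg_ne hZg (heq.symm.trans hc)⟩)
    exact (Set.Finite.preimage (Subtype.val_injective.injOn)
      (((hS X hX Z hZ).insert b.1).insert a.1)).subset hsub
  letI : LocallyFiniteOrder ↥(parClass L e₀) := LocallyFiniteOrder.ofFiniteIcc hIcc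
  rcases classify_llf (α := ↥(parClass L e₀)) with ⟨f, hf⟩ | ⟨f, hf⟩ | ⟨f, hf⟩
  · exact Or.inl ⟨f, hf⟩
  · exact Or.inr (Or.inl ⟨f, hf⟩)
  · exact Or.inr (Or.inr (Or.inl ⟨f, hf⟩))
end

section
/- Let (E,L) be an FAOM and X ∈ L, and set A := z(X). Then the set 𝒪 := {Y|_A | Y ∈ L, X ≤ Y} equals the restriction L[A] = {Y|_A | Y ∈ L}, and 𝒪 is the set of covectors of an oriented matroid on the ground set A: it contains the zero vector and satisfies axioms (FS) and (SE) as a system of sign vectors on A. -/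
open Set

variable {E : Type*}

lemma sVComp_mem_of_axFS {L : Set (E → SignType)} (hFS : axFS L)
    {X Y : E → SignType} (hX : X ∈ L) (hY : Y ∈ L) : sVComp X Y ∈ L := by
  have h1 : sVComp X (-Y) ∈ L := hFS X hX Y hY
  have h2 : sVComp X (-(sVComp X (-Y))) ∈ L := hFS X hX _ h1
  have : sVComp X (-(sVComp X (-Y))) = sVComp X Y := by
    funext e
    by_cases h : X e = 0 <;> simp [sVComp, h]
  rwa [this] at h2

/-- upper intervals of FAOMs are oriented matroids; the system
`{Y|_{z(X)} | Y ≥ X}` equals the restriction `L[z(X)]`, contains the zero vector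
and satisfies (FS) and (SE). -/
theorem faom_upper_interval_om (L : Set (E → SignType)) (hF : isFAOM L)
    (X : E → SignType) (hX : X ∈ L) :
    let O : Set ((↥(sVZero X)) → SignType) :=
      {Z | ∃ Y ∈ L, sVLe X Y ∧ Z = fun a => Y a.val}
    O = restrictSys L (sVZero X) ∧
    (0 : (↥(sVZero X)) → SignType) ∈ O ∧ axFS O ∧ axSE O := by
  intro O
  have hFS : axFS L := hF.1.1
  have hSE : axSE L := hF.1.2.1
  have hO : ∀ Z : ↥(sVZero X) → SignType,
      Z ∈ O ↔ ∃ Y ∈ L, sVLe X Y ∧ Z = fun a => Y a.val := fun Z => Iff.rfl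
  have hOeq : O = restrictSys L (sVZero X) := by
    apply Set.Subset.antisymm
    · intro Z hZ
      obtain ⟨Y, hY, _, rfl⟩ := (hO Z).mp hZ
      exact ⟨Y, hY, rfl⟩
    · rintro Z ⟨Y, hY, rfl⟩
      refine (hO _).mpr ⟨sVComp X Y, sVComp_mem_of_axFS hFS hX hY, ?_, ?_⟩
      · intro e
        by_cases h : X e = 0
        · exact Or.inl h
        · exact Or.inr (by simp [sVComp, h])
      · funext a
        have ha : X a.val = 0 := a.2
        simp [sVComp, ha]
  refine ⟨hOeq, ?_, ?_, ?_⟩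
  · -- zero vector
    refine (hO _).mpr ⟨X, hX, fun e => Or.inr rfl, ?_⟩
    funext a
    exact ((a.2 : X a.val = 0)).symm
  · -- axFS O
    intro Z1 hZ1 Z2 hZ2
    obtain ⟨Y1, hY1, hle1, rfl⟩ := (hO Z1).mp hZ1
    obtain ⟨Y2, hY2, hle2, rfl⟩ := (hO Z2).mp hZ2
    have hY : sVComp Y1 (-Y2) ∈ L := hFS Y1 hY1 Y2 hY2
    refine (hO _).mpr ⟨sVComp Y1 (-Y2), hY, ?_, ?_⟩
    · intro e
      rcases hle1 e with h | h
      · exact Or.inl h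
      · by_cases h1 : Y1 e = 0
        · exact Or.inl (h.trans h1)
        · exact Or.inr (by simpa [sVComp, h1] using h)
    · funext a
      simp [sVComp]
  · -- axSE O
    intro Z1 hZ1 Z2 hZ2 e he
    obtain ⟨Y1, hY1, hle1, rfl⟩ := (hO Z1).mp hZ1
    obtain ⟨Y2, hY2, hle2, rfl⟩ := (hO Z2).mp hZ2
    obtain ⟨h1, h2, h3⟩ := he
    have heE : e.val ∈ sVSep Y1 Y2 := ⟨h1, h2, h3⟩
    obtain ⟨Z, hZ, hZe, hZf⟩ := hSE Y1 hY1 Y2 hY2 e.val heE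
    have hXZ : sVLe X Z := by
      intro g
      rcases hle1 g with h | h
      · exact Or.inl h
      · by_cases h0 : X g = 0
        · exact Or.inl h0
        · right
          have hY1g : Y1 g ≠ 0 := fun hc => h0 (h.trans hc)
          have hg : g ∉ sVSep Y1 Y2 := by
            rintro ⟨-, -, hne⟩
            rcases hle2 g with h' | h'
            · exact h0 h'
            · exact hne (h.symm.trans h')
          rw [hZf g hg]
          simpa [sVComp, hY1g] using h
    refine ⟨fun a : ↥(sVZero X) => Z a.val, (hO _).mpr ⟨Z, hZ, hXZ, rfl⟩, hZe, ?_⟩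
    intro f hf
    have hfE : f.val ∉ sVSep Y1 Y2 := fun hc => hf ⟨hc.1, hc.2.1, hc.2.2⟩
    have := hZf f.val hfE
    simpa [sVComp] using this
end

section
/- Let (E,L) be a simple FAOM, 𝒯 its set of topes, and B ∈ 𝒯. Then there exists a nondecreasing sequence C₀ ⊆ C₁ ⊆ C₂ ⊆ … of finite convex subsets of 𝒯 such that B ∈ C₀ and ⋃_{i∈ℕ} C_i = 𝒯. -/
open Set

variable {E : Type*}

section AuxExhaust

private lemma signType_neg_of_ne {a b : SignType} (ha : a ≠ 0) (hb : b ≠ 0) (hab : a ≠ b) :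
    b = -a := by revert ha hb hab; revert a b; decide

private lemma signType_not_both {a b c : SignType} (ha : a ≠ 0) (hb : b ≠ 0) (hc : c ≠ 0)
    (hab : a ≠ b) (hca : c ≠ a) (hcb : c ≠ b) : False := by
  revert ha hb hc hab hca hcb; revert a b c; decide

private lemma sVSep_comm' (X Y : E → SignType) : sVSep X Y = sVSep Y X := by
  ext e
  simp only [sVSep, Set.mem_setOf_eq]
  exact ⟨fun ⟨h1, h2, h3⟩ => ⟨h2, h1, h3.symm⟩, fun ⟨h1, h2, h3⟩ => ⟨h2, h1, h3.symm⟩⟩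

private lemma topes_agree {L : Set (E → SignType)} {T T' : E → SignType} (hT : T ∈ topes L)
    (hT' : T' ∈ topes L) {f : E} (hf : f ∉ sVSep T T') : T f = T' f := by
  by_contra h
  exact hf ⟨hT.2 f, hT'.2 f, h⟩

private lemma axC_of_axFS_s12 {L : Set (E → SignType)} (h : axFS L) : axC L := by
  intro X hX Y hY
  have h1 : sVComp X (-Y) ∈ L := h X hX Y hY
  have h2 : sVComp X (-(sVComp X (-Y))) ∈ L := h X hX _ h1
  have heq : sVComp X Y = sVComp X (-(sVComp X (-Y))) := by
    funext e
    by_cases hX0 : X e = 0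
    · simp [sVComp, hX0]
    · simp [sVComp, hX0]
  rw [heq]; exact h2

private lemma comp_tope {L : Set (E → SignType)} (hC : axC L) {Z T : E → SignType}
    (hZ : Z ∈ L) (hT : T ∈ topes L) : sVComp Z T ∈ topes L := by
  refine ⟨hC Z hZ T hT.1, fun e => ?_⟩
  by_cases h : Z e = 0
  · simp [sVComp, h]; exact hT.2 e
  · simp [sVComp, h]

private lemma step_lemma {L : Set (E → SignType)} (hC : axC L) {T T' Z : E → SignType}
    (hT : T ∈ topes L) (hT' : T' ∈ topes L) (hZL : Z ∈ L)
    (hZ : ∀ f ∉ sVSep T T', Z f = T f) {e : E} (he : e ∈ sVSep T T') (hZe : Z e = 0) :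
    sVComp Z T' ∈ topes L ∧
    sVSep T (sVComp Z T') ⊆ sVSep T T' ∧
    sVSep (sVComp Z T') T' ⊆ sVSep T T' ∧
    (∀ f ∈ sVSep T (sVComp Z T'), f ∉ sVSep (sVComp Z T') T') ∧
    e ∈ sVSep T (sVComp Z T') := by
  set W := sVComp Z T' with hW
  have hWt : W ∈ topes L := comp_tope hC hZL hT'
  have hWoff : ∀ f ∉ sVSep T T', W f = T f := by
    intro f hf
    have h1 : Z f = T f := hZ f hf
    have h2 : T f ≠ 0 := hT.2 f
    simp [hW, sVComp, h1, h2]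
  have hsub1 : sVSep T W ⊆ sVSep T T' := by
    intro f hf
    by_contra hfn
    exact hf.2.2 ((hWoff f hfn).symm)
  have hsub2 : sVSep W T' ⊆ sVSep T T' := by
    intro f hf
    by_contra hfn
    exact hf.2.2 ((hWoff f hfn).trans (topes_agree hT hT' hfn))
  refine ⟨hWt, hsub1, hsub2, ?_, ?_⟩
  · intro f hf1 hf2
    have hfsep := hsub1 hf1
    exact signType_not_both (hT.2 f) (hT'.2 f) (hWt.2 f) hfsep.2.2 (Ne.symm hf1.2.2) hf2.2.2
  · have hWe : W e = T' e := by simp [hW, sVComp, hZe]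
    exact ⟨hT.2 e, by rw [hWe]; exact hT'.2 e, by rw [hWe]; exact he.2.2⟩

/-- Adjacency of topes used for the exhaustion argument. -/
def relAdj (L : Set (E → SignType)) (T T' : E → SignType) : Prop :=
  T' ∈ topes L ∧ T ≠ T' ∧ sVOplus T T' ∈ L

private lemma sVOplus_comp_neg {L : Set (E → SignType)} {T T' : E → SignType}
    (hT : T ∈ topes L) (hT' : T' ∈ topes L) :
    sVComp (sVOplus T T') (-T) = T' := by
  funext e
  by_cases h : T e ≠ 0 ∧ T' e ≠ 0 ∧ T e ≠ T' e
  · have h0 : sVOplus T T' e = 0 := by simp only [sVOplus]; rw [if_pos h]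
    simp only [sVComp, h0, ne_eq, not_true_eq_false, if_false, not_not, Pi.neg_apply]
    exact (signType_neg_of_ne h.1 h.2.1 h.2.2).symm
  · have hTe : T e ≠ 0 := hT.2 e
    have heq : T e = T' e := by
      by_contra hne
      exact h ⟨hTe, hT'.2 e, hne⟩
    have h0 : sVOplus T T' e = T e := by
      simp only [sVOplus]; rw [if_neg h]; simp [sVComp, hTe]
    simp [sVComp, h0, hTe, heq]

private lemma nbrs_finite {L : Set (E → SignType)} (hI : axI L) {T : E → SignType}
    (hT : T ∈ topes L) : {T' | relAdj L T T'}.Finite := by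
  have hfin : {Y | Y ∈ L ∧ sVLe Y T}.Finite := hI T hT.1
  apply Set.Finite.of_finite_image (f := fun T' => sVOplus T T')
  · apply hfin.subset
    rintro _ ⟨T', hT', rfl⟩
    refine ⟨hT'.2.2, ?_⟩
    intro e
    by_cases h : T e ≠ 0 ∧ T' e ≠ 0 ∧ T e ≠ T' e
    · left; simp only [sVOplus]; rw [if_pos h]
    · right; simp only [sVOplus]; rw [if_neg h]; simp [sVComp, hT.2 e]
  · intro a ha b hb hab
    have hab' : sVOplus T a = sVOplus T b := hab
    have h1 := sVOplus_comp_neg hT ha.1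
    have h2 := sVOplus_comp_neg hT hb.1
    rw [← h1, ← h2, hab']

/-- Sets of topes reachable from `B` in at most `n` adjacency steps. -/
def reachSet (L : Set (E → SignType)) (B : E → SignType) : ℕ → Set (E → SignType)
  | 0 => {B}
  | n + 1 => reachSet L B n ∪ ⋃ T ∈ reachSet L B n, {T' | relAdj L T T'}

private lemma reachSet_subset_topes {L : Set (E → SignType)} {B : E → SignType}
    (hB : B ∈ topes L) : ∀ n, reachSet L B n ⊆ topes L := by
  intro n
  induction n with
  | zero =>
    intro T hT
    have : T = B := hT
    rw [this]; exact hB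
  | succ n ih =>
    intro T hT
    rcases hT with h | h
    · exact ih h
    · obtain ⟨T0, hT0⟩ := Set.mem_iUnion.mp h
      obtain ⟨hmem, hrel⟩ := Set.mem_iUnion.mp hT0
      exact hrel.1

private lemma reachSet_finite {L : Set (E → SignType)} {B : E → SignType}
    (hB : B ∈ topes L) (hI : axI L) : ∀ n, (reachSet L B n).Finite := by
  intro n
  induction n with
  | zero => exact Set.finite_singleton B
  | succ n ih =>
    exact ih.union (ih.biUnion fun T hT => nbrs_finite hI (reachSet_subset_topes hB n hT))

private lemma reach_mem {L : Set (E → SignType)} {B T : E → SignType}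
    (h : Relation.ReflTransGen (relAdj L) B T) : ∃ n, T ∈ reachSet L B n := by
  induction h with
  | refl => exact ⟨0, rfl⟩
  | tail _ hrel ih =>
    obtain ⟨n, hn⟩ := ih
    exact ⟨n + 1, Or.inr (Set.mem_biUnion hn hrel)⟩

private lemma reach_of_sep {L : Set (E → SignType)} (hC : axC L) (hSE : axSE L) (hS : axS L) :
    ∀ n : ℕ, ∀ T T' : E → SignType, T ∈ topes L → T' ∈ topes L →
      (sVSep T T').ncard ≤ n → Relation.ReflTransGen (relAdj L) T T' := by
  intro n
  induction n with
  | zero =>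
    intro T T' hT hT' hcard
    have hfin := hS T hT.1 T' hT'.1
    have hemp : sVSep T T' = ∅ := by
      rw [← Set.ncard_eq_zero hfin]
      omega
    have : T = T' := funext fun e =>
      topes_agree hT hT' (by rw [hemp]; exact Set.notMem_empty e)
    rw [this]
  | succ n ih =>
    intro T T' hT hT' hcard
    by_cases hTT : T = T'
    · rw [hTT]
    have hfin := hS T hT.1 T' hT'.1
    have hfin' : (sVSep T' T).Finite := by rw [sVSep_comm']; exact hfin
    have hcard' : (sVSep T' T).ncard ≤ n + 1 := by rw [sVSep_comm']; exact hcard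
    have hex : ∃ e, e ∈ sVSep T T' := by
      by_contra hno
      push_neg at hno
      exact hTT (funext fun e => topes_agree hT hT' (hno e))
    obtain ⟨e, he⟩ := hex
    obtain ⟨Z, hZL, hZe, hZoff⟩ := hSE T hT.1 T' hT'.1 e he
    have hZoffT : ∀ f ∉ sVSep T T', Z f = T f := by
      intro f hf
      rw [hZoff f hf]
      simp [sVComp, hT.2 f]
    have hZoffT' : ∀ f ∉ sVSep T' T, Z f = T' f := by
      intro f hf
      rw [sVSep_comm'] at hf
      rw [hZoffT f hf]
      exact topes_agree hT hT' hf
    have he' : e ∈ sVSep T' T := by rw [sVSep_comm']; exact he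
    obtain ⟨hWt, hsub1, hsub2, hdisj, heW⟩ := step_lemma hC hT hT' hZL hZoffT he hZe
    obtain ⟨hW't, hsub1', hsub2', hdisj', heW'⟩ := step_lemma hC hT' hT hZL hZoffT' he' hZe
    set W := sVComp Z T' with hWdef
    set W' := sVComp Z T with hW'def
    by_cases hWT' : W = T'
    · by_cases hW'T : W' = T
      · -- direct edge : Z = sVOplus T T'
        have hZeq : Z = sVOplus T T' := by
          funext f
          by_cases hf : f ∈ sVSep T T'
          · have hc : T f ≠ 0 ∧ T' f ≠ 0 ∧ T f ≠ T' f := hf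
            have h0 : sVOplus T T' f = 0 := by simp only [sVOplus]; rw [if_pos hc]
            rw [h0]
            by_contra hZf
            have h1 : W f = Z f := by simp [hWdef, sVComp, hZf]
            have h2 : W' f = Z f := by simp [hW'def, sVComp, hZf]
            rw [hWT'] at h1
            rw [hW'T] at h2
            exact hc.2.2 (h2.trans h1.symm)
          · have hc : ¬(T f ≠ 0 ∧ T' f ≠ 0 ∧ T f ≠ T' f) := hf
            have h0 : sVOplus T T' f = sVComp T T' f := by
              simp only [sVOplus]; rw [if_neg hc]
            rw [h0]
            exact hZoff f hf
        exact Relation.ReflTransGen.single ⟨hT', hTT, hZeq ▸ hZL⟩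
      · -- go through W'
        have hxex : ∃ x, x ∈ sVSep W' T := by
          by_contra hno
          push_neg at hno
          exact hW'T (funext fun f => (topes_agree hW't hT (hno f)))
        obtain ⟨x, hx⟩ := hxex
        have hb1 : (sVSep T' W').ncard ≤ n := by
          have hss : sVSep T' W' ⊆ sVSep T' T \ {x} := fun f hf =>
            ⟨hsub1' hf, fun hfx => (hdisj' f hf) (by rw [Set.mem_singleton_iff] at hfx; rw [hfx]; exact hx)⟩
          have h1 : (sVSep T' W').ncard ≤ (sVSep T' T \ {x}).ncard :=
            Set.ncard_le_ncard hss hfin'.diff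
          have h2 : (sVSep T' T \ {x}).ncard < (sVSep T' T).ncard :=
            Set.ncard_diff_singleton_lt_of_mem (hsub2' hx) hfin'
          omega
        have hb2 : (sVSep W' T).ncard ≤ n := by
          have hss : sVSep W' T ⊆ sVSep T' T \ {e} := fun f hf =>
            ⟨hsub2' hf, fun hfe => (hdisj' e heW') (by rw [Set.mem_singleton_iff] at hfe; rw [← hfe]; exact hf)⟩
          have h1 : (sVSep W' T).ncard ≤ (sVSep T' T \ {e}).ncard :=
            Set.ncard_le_ncard hss hfin'.diff
          have h2 : (sVSep T' T \ {e}).ncard < (sVSep T' T).ncard :=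
            Set.ncard_diff_singleton_lt_of_mem he' hfin'
          omega
        have step1 : Relation.ReflTransGen (relAdj L) T W' := by
          apply ih T W' hT hW't
          rw [sVSep_comm']; exact hb2
        have step2 : Relation.ReflTransGen (relAdj L) W' T' := by
          apply ih W' T' hW't hT'
          rw [sVSep_comm']; exact hb1
        exact step1.trans step2
    · -- go through W
      have hxex : ∃ x, x ∈ sVSep W T' := by
        by_contra hno
        push_neg at hno
        exact hWT' (funext fun f => (topes_agree hWt hT' (hno f)))
      obtain ⟨x, hx⟩ := hxex
      have hb1 : (sVSep T W).ncard ≤ n := by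
        have hss : sVSep T W ⊆ sVSep T T' \ {x} := fun f hf =>
          ⟨hsub1 hf, fun hfx => (hdisj f hf) (by rw [Set.mem_singleton_iff] at hfx; rw [hfx]; exact hx)⟩
        have h1 : (sVSep T W).ncard ≤ (sVSep T T' \ {x}).ncard :=
          Set.ncard_le_ncard hss hfin.diff
        have h2 : (sVSep T T' \ {x}).ncard < (sVSep T T').ncard :=
          Set.ncard_diff_singleton_lt_of_mem (hsub2 hx) hfin
        omega
      have hb2 : (sVSep W T').ncard ≤ n := by
        have hss : sVSep W T' ⊆ sVSep T T' \ {e} := fun f hf =>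
          ⟨hsub2 hf, fun hfe => (hdisj e heW) (by rw [Set.mem_singleton_iff] at hfe; rw [← hfe]; exact hf)⟩
        have h1 : (sVSep W T').ncard ≤ (sVSep T T' \ {e}).ncard :=
          Set.ncard_le_ncard hss hfin.diff
        have h2 : (sVSep T T' \ {e}).ncard < (sVSep T T').ncard :=
          Set.ncard_diff_singleton_lt_of_mem he hfin
        omega
      exact (ih T W hT hWt hb1).trans (ih W T' hWt hT' hb2)

end AuxExhaust

/-- exhausting sequence of finite convex sets of topes. -/
theorem topes_exhausting_convex_sequence (L : Set (E → SignType))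
    (hF : isFAOM L) (hs : isSimple L)
    (B : E → SignType) (hB : B ∈ topes L) :
    ∃ C : ℕ → Set (E → SignType),
      (∀ i, (C i).Finite ∧ convexTopes L (C i)) ∧
      (∀ i, C i ⊆ C (i + 1)) ∧
      B ∈ C 0 ∧ (⋃ i, C i) = topes L := by
  obtain ⟨⟨hFS, hSE, hP⟩, hS, hZax, hI⟩ := hF
  have hC : axC L := axC_of_axFS_s12 hFS
  have hRtop : ∀ n, reachSet L B n ⊆ topes L := reachSet_subset_topes hB
  have hRfin : ∀ n, (reachSet L B n).Finite := reachSet_finite hB hI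
  have hRmono : ∀ n, reachSet L B n ⊆ reachSet L B (n + 1) := fun n => Set.subset_union_left
  set A : ℕ → Set E := fun i => ⋃ T ∈ reachSet L B i, sVSep B T with hA
  have hAfin : ∀ i, (A i).Finite := fun i =>
    (hRfin i).biUnion fun T hT => hS B hB.1 T (hRtop i hT).1
  have hAmono : ∀ i, A i ⊆ A (i + 1) := by
    intro i x hx
    obtain ⟨T, hT⟩ := Set.mem_iUnion.mp hx
    obtain ⟨hTm, hxm⟩ := Set.mem_iUnion.mp hT
    exact Set.mem_biUnion (hRmono i hTm) hxm
  refine ⟨fun i => {T | T ∈ topes L ∧ sVSep B T ⊆ A i}, ?_, ?_, ?_, ?_⟩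
  · intro i
    constructor
    · -- finiteness
      apply Set.Finite.of_finite_image (f := fun T => sVSep B T)
      · apply ((hAfin i).finite_subsets).subset
        rintro _ ⟨T, hT, rfl⟩
        exact hT.2
      · intro a ha b hb hab
        have hab' : sVSep B a = sVSep B b := hab
        funext f
        by_cases hf : f ∈ sVSep B a
        · have hf' : f ∈ sVSep B b := hab' ▸ hf
          have h1 : a f = -(B f) := signType_neg_of_ne hf.1 hf.2.1 hf.2.2
          have h2 : b f = -(B f) := signType_neg_of_ne hf'.1 hf'.2.1 hf'.2.2
          rw [h1, h2]
        · have hf' : f ∉ sVSep B b := by rw [← hab']; exact hf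
          have h1 : B f = a f := topes_agree hB ha.1 hf
          have h2 : B f = b f := topes_agree hB hb.1 hf'
          rw [← h1, ← h2]
    · -- convexity
      refine ⟨fun T hT => hT.1, ?_⟩
      intro T hT T'' hT'' T' hT'top hsep
      refine ⟨hT'top, ?_⟩
      intro f hf
      by_cases hfT : f ∈ sVSep T T'
      · have hfn : f ∉ sVSep T' T'' := by
          intro hmem
          exact (Set.eq_empty_iff_forall_notMem.mp hsep f) ⟨hfT, hmem⟩
        have heq : T' f = T'' f := topes_agree hT'top hT''.1 hfn
        exact hT''.2 ⟨hf.1, by rw [← heq]; exact hf.2.1, by rw [← heq]; exact hf.2.2⟩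
      · have heq : T f = T' f := topes_agree hT.1 hT'top hfT
        exact hT.2 ⟨hf.1, hT.1.2 f, fun hbt => hf.2.2 (hbt ▸ heq)⟩
  · intro i T hT
    exact ⟨hT.1, hT.2.trans (hAmono i)⟩
  · refine ⟨hB, ?_⟩
    intro f hf
    exact absurd rfl hf.2.2
  · ext T
    simp only [Set.mem_iUnion]
    constructor
    · rintro ⟨i, hT, _⟩
      exact hT
    · intro hT
      have hreach := reach_of_sep hC hSE hS (sVSep B T).ncard B T hB hT le_rfl
      obtain ⟨n, hn⟩ := reach_mem hreach
      refine ⟨n, hT, ?_⟩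
      intro f hf
      exact Set.mem_biUnion hn hf
end

section
/- Let (E,L) be a simple FAOM with tope set 𝒯, let C ⊆ 𝒯 be convex and B ∈ C. Then C is a lower ideal of the tope poset based at B: for all topes T,T' ∈ 𝒯 with T' ∈ C and S(B,T) ⊆ S(B,T'), one has T ∈ C. -/
open Set

variable {E : Type*}

lemma signType_eq_of_ne : ∀ (a b c : SignType), a ≠ 0 → b ≠ 0 → c ≠ 0 →
    a ≠ b → a ≠ c → b = c := by
  intro a b c ha hb hc hab hac
  cases a <;> cases b <;> cases c <;> simp_all

/-- a convex subset of topes is a lower ideal of the tope poset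
based at any of its elements. -/
theorem convex_topes_lower_ideal (L : Set (E → SignType))
    (hF : isFAOM L) (hs : isSimple L)
    (C : Set (E → SignType)) (hC : convexTopes L C)
    (B : E → SignType) (hB : B ∈ C)
    (T T' : E → SignType) (hT : T ∈ topes L) (hT'top : T' ∈ topes L) (hT' : T' ∈ C)
    (hsub : sVSep B T ⊆ sVSep B T') : T ∈ C := by
  apply hC.2 B hB T' hT' T hT
  ext e
  simp only [Set.mem_inter_iff, Set.mem_empty_iff_false, iff_false, not_and]
  rintro ⟨hBe, hTe, hne⟩ ⟨_, hT'e, hne'⟩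
  obtain ⟨-, hT'ne, hBT'⟩ := hsub ⟨hBe, hTe, hne⟩
  exact hne' (signType_eq_of_ne _ _ _ hBe hTe hT'ne hne hBT')
end

section
/- The set of covectors of any FAOM is countable: if (E,L) is an FAOM, then L is a countable set. -/
open Set

variable {E : Type*}

section AuxCountable

variable {L : Set (E → SignType)}

private lemma sVLe_refl (X : E → SignType) : sVLe X X := fun _ => Or.inr rfl

private lemma sVLe_trans {X Y Z : E → SignType} (h1 : sVLe X Y) (h2 : sVLe Y Z) : sVLe X Z := by
  intro e
  rcases h1 e with h | h
  · exact Or.inl h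
  · rcases h2 e with h' | h'
    · exact Or.inl (h.trans h')
    · exact Or.inr (h.trans h')

private lemma sVLe_comp (X Y : E → SignType) : sVLe X (sVComp X Y) := by
  intro e
  by_cases h : X e = 0
  · exact Or.inl h
  · exact Or.inr (by simp [sVComp, h])

private lemma comp_mem (hFS : axFS L) {X Y : E → SignType} (hX : X ∈ L) (hY : Y ∈ L) :
    sVComp X Y ∈ L := by
  have h1 : sVComp X (-Y) ∈ L := hFS X hX Y hY
  have h2 : sVComp X (-(sVComp X (-Y))) ∈ L := hFS X hX _ h1
  have heq : sVComp X (-(sVComp X (-Y))) = sVComp X Y := by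
    funext e
    by_cases h : X e = 0 <;> simp [sVComp, h]
  rwa [heq] at h2

/-- A covector with maximal possible support everywhere. -/
private def isFull (L : Set (E → SignType)) (M : E → SignType) : Prop :=
  M ∈ L ∧ ∀ e, M e = 0 → ∀ Y ∈ L, Y e = 0

private lemma exists_full_ge (hFS : axFS L) (hZ : axZ L) :
    ∀ X ∈ L, ∃ M, isFull L M ∧ sVLe X M := by
  have key : ∀ k : ℕ, ∀ X, X ∈ L → ({e | X e = 0 ∧ ∃ Y ∈ L, Y e ≠ 0}).ncard ≤ k →
      ∃ M, isFull L M ∧ sVLe X M := by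
    intro k
    induction k with
    | zero =>
      intro X hX hc
      have hfin : ({e | X e = 0 ∧ ∃ Y ∈ L, Y e ≠ 0}).Finite :=
        Set.Finite.subset (hZ X hX) (fun e he => he.1)
      have hemp : {e | X e = 0 ∧ ∃ Y ∈ L, Y e ≠ 0} = ∅ :=
        (Set.ncard_eq_zero hfin).mp (Nat.le_zero.mp hc)
      refine ⟨X, ⟨hX, ?_⟩, sVLe_refl X⟩
      intro e hXe Y hY
      by_contra hYe
      have hmem : e ∈ {e | X e = 0 ∧ ∃ Y ∈ L, Y e ≠ 0} := ⟨hXe, Y, hY, hYe⟩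
      rw [hemp] at hmem
      exact hmem
    | succ k ih =>
      intro X hX hc
      rcases Set.eq_empty_or_nonempty {e | X e = 0 ∧ ∃ Y ∈ L, Y e ≠ 0} with hemp | ⟨e, he⟩
      · refine ⟨X, ⟨hX, ?_⟩, sVLe_refl X⟩
        intro e hXe Y hY
        by_contra hYe
        have hmem : e ∈ {e | X e = 0 ∧ ∃ Y ∈ L, Y e ≠ 0} := ⟨hXe, Y, hY, hYe⟩
        rw [hemp] at hmem
        exact hmem
      · obtain ⟨hXe, Y, hY, hYe⟩ := he
        have hX' : sVComp X Y ∈ L := comp_mem hFS hX hY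
        have hfin : ({e | X e = 0 ∧ ∃ Y ∈ L, Y e ≠ 0}).Finite :=
          Set.Finite.subset (hZ X hX) (fun e he => he.1)
        have hsub : {f | sVComp X Y f = 0 ∧ ∃ Y' ∈ L, Y' f ≠ 0}
            ⊆ {e | X e = 0 ∧ ∃ Y ∈ L, Y e ≠ 0} \ {e} := by
          rintro f ⟨hf0, hf1⟩
          have hXf : X f = 0 := by
            by_contra hXf
            simp [sVComp, hXf] at hf0
          refine ⟨⟨hXf, hf1⟩, ?_⟩
          simp only [Set.mem_singleton_iff]
          intro hfe
          rw [hfe] at hf0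
          simp [sVComp, hXe, hYe] at hf0
        have hemem : e ∈ {e | X e = 0 ∧ ∃ Y ∈ L, Y e ≠ 0} := ⟨hXe, Y, hY, hYe⟩
        have hcard : ({f | sVComp X Y f = 0 ∧ ∃ Y' ∈ L, Y' f ≠ 0}).ncard ≤ k := by
          have h1 := Set.ncard_le_ncard hsub (Set.Finite.subset hfin Set.diff_subset)
          have h2 := Set.ncard_diff_singleton_of_mem hemem
          rw [h2] at h1
          exact h1.trans (le_trans (Nat.sub_le_sub_right hc 1) (le_of_eq (Nat.add_sub_cancel k 1)))
        obtain ⟨M, hMfull, hle⟩ := ih (sVComp X Y) hX' hcard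
        exact ⟨M, hMfull, sVLe_trans (sVLe_comp X Y) hle⟩
  intro X hX
  exact key ({e | X e = 0 ∧ ∃ Y ∈ L, Y e ≠ 0}).ncard X hX le_rfl

private lemma full_eq_of_sep_empty {M N : E → SignType} (hM : isFull L M) (hN : isFull L N)
    (h : sVSep M N = ∅) : M = N := by
  funext f
  by_cases hMf : M f = 0
  · rw [hMf, hM.2 f hMf N hN.1]
  · have hNf : N f ≠ 0 := fun h0 => hMf (hN.2 f h0 M hM.1)
    by_contra hne
    have hmem : f ∈ sVSep M N := ⟨hMf, hNf, hne⟩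
    rw [h] at hmem
    exact hmem

/-- Adjacency of full covectors: having a common lower bound in `L`. -/
private def relf (L : Set (E → SignType)) (M N : E → SignType) : Prop :=
  isFull L M ∧ isFull L N ∧ ∃ Z ∈ L, sVLe Z M ∧ sVLe Z N

private lemma relf_symm : Symmetric (relf L) := by
  rintro M N ⟨h1, h2, Z, hZ, hm, hn⟩
  exact ⟨h2, h1, Z, hZ, hn, hm⟩

private lemma rtg_symm {α : Type*} {r : α → α → Prop} (hsym : Symmetric r) {a b : α}
    (h : Relation.ReflTransGen r a b) : Relation.ReflTransGen r b a := by
  induction h with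
  | refl => exact Relation.ReflTransGen.refl
  | tail _ h2 ih => exact Relation.ReflTransGen.head (hsym h2) ih

private lemma nbrs_countable (hI : axI L) (hZ : axZ L) (M : E → SignType) :
    {N | relf L M N}.Countable := by
  by_cases hM : M ∈ L
  · have hsub : {N | relf L M N}
        ⊆ ⋃ Z ∈ {Y | Y ∈ L ∧ sVLe Y M}, {N | Z ∈ L ∧ sVLe Z N ∧ isFull L N} := by
      rintro N ⟨_, hNfull, Z, hZL, hZM, hZN⟩
      exact Set.mem_biUnion ⟨hZL, hZM⟩ ⟨hZL, hZN, hNfull⟩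
    refine Set.Countable.mono hsub ?_
    refine Set.Countable.biUnion (hI M hM).countable ?_
    intro Z hZ'
    rcases hZ' with ⟨hZL, -⟩
    have hfin : (sVZero Z).Finite := hZ Z hZL
    haveI : Finite (↥(sVZero Z)) := hfin.to_subtype
    refine Set.Finite.countable ?_
    refine Set.Finite.of_finite_image (f := fun N => (fun x : ↥(sVZero Z) => N x.1))
      (Set.toFinite _) ?_
    rintro N1 ⟨-, h1, -⟩ N2 ⟨-, h2, -⟩ heq
    funext f
    by_cases hf : Z f = 0
    · exact congrFun heq ⟨f, hf⟩
    · have e1 : Z f = N1 f := (h1 f).resolve_left hf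
      have e2 : Z f = N2 f := (h2 f).resolve_left hf
      rw [← e1, e2]
  · have : {N | relf L M N} = ∅ := by
      ext N
      simp only [Set.mem_setOf_eq, Set.mem_empty_iff_false, iff_false]
      rintro ⟨hMfull, -⟩
      exact hM hMfull.1
    simp [this]

private lemma connect (hFS : axFS L) (hSE : axSE L) (hS : axS L) :
    ∀ k : ℕ, ∀ M N, isFull L M → isFull L N → (sVSep M N).ncard ≤ k →
      Relation.ReflTransGen (relf L) M N := by
  intro k
  induction k with
  | zero =>
    intro M N hM hN hc
    have hfin := hS M hM.1 N hN.1
    have hemp : sVSep M N = ∅ := (Set.ncard_eq_zero hfin).mp (Nat.le_zero.mp hc)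
    rw [full_eq_of_sep_empty hM hN hemp]
  | succ k ih =>
    intro M N hM hN hc
    rcases Set.eq_empty_or_nonempty (sVSep M N) with hemp | ⟨e, he⟩
    · rw [full_eq_of_sep_empty hM hN hemp]
    · obtain ⟨Z, hZmem⟩ := hSE M hM.1 N hN.1 e he
      obtain ⟨hZL, hZe, hZval⟩ := hZmem
      have hfin := hS M hM.1 N hN.1
      -- key subsets
      have key1 : sVSep Z M ⊆ sVSep M N \ {e} := by
        rintro f ⟨hZf, hMf, hne⟩
        refine ⟨?_, ?_⟩
        · by_contra hf
          have h := hZval f hf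
          simp [sVComp, hMf] at h
          exact hne h
        · simp only [Set.mem_singleton_iff]
          intro hfe
          rw [hfe] at hZf
          exact hZf hZe
      have key2 : sVSep Z N ⊆ sVSep M N \ {e} := by
        rintro f ⟨hZf, hNf, hne⟩
        refine ⟨?_, ?_⟩
        · by_contra hf
          have h := hZval f hf
          by_cases hMf : M f = 0
          · simp [sVComp, hMf] at h
            exact hne h
          · simp [sVComp, hMf] at h
            have hMN : M f = N f := by
              by_contra hMN
              exact hf ⟨hMf, hNf, hMN⟩
            exact hne (h.trans hMN)
        · simp only [Set.mem_singleton_iff]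
          intro hfe
          rw [hfe] at hZf
          exact hZf hZe
      -- the neighboring fulls
      have hM' : isFull L (sVComp Z M) := by
        refine ⟨comp_mem hFS hZL hM.1, ?_⟩
        intro f hf Y hY
        by_cases hZf : Z f = 0
        · have hMf : M f = 0 := by simpa [sVComp, hZf] using hf
          exact hM.2 f hMf Y hY
        · simp [sVComp, hZf] at hf
      have hN' : isFull L (sVComp Z N) := by
        refine ⟨comp_mem hFS hZL hN.1, ?_⟩
        intro f hf Y hY
        by_cases hZf : Z f = 0
        · have hNf : N f = 0 := by simpa [sVComp, hZf] using hf
          exact hN.2 f hNf Y hY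
        · simp [sVComp, hZf] at hf
      have sepMM' : sVSep M (sVComp Z M) ⊆ sVSep M N \ {e} := by
        rintro f ⟨hMf, hM'f, hne⟩
        by_cases hZf : Z f = 0
        · have heqf : sVComp Z M f = M f := by simp [sVComp, hZf]
          exact absurd heqf.symm hne
        · have hval : sVComp Z M f = Z f := by simp [sVComp, hZf]
          exact key1 ⟨hZf, hMf, fun h => hne (by rw [hval, h])⟩
      have sepNN' : sVSep N (sVComp Z N) ⊆ sVSep M N \ {e} := by
        rintro f ⟨hNf, hN'f, hne⟩
        by_cases hZf : Z f = 0
        · have heqf : sVComp Z N f = N f := by simp [sVComp, hZf]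
          exact absurd heqf.symm hne
        · have hval : sVComp Z N f = Z f := by simp [sVComp, hZf]
          exact key2 ⟨hZf, hNf, fun h => hne (by rw [hval, h])⟩
      have hdfin : (sVSep M N \ {e}).Finite := Set.Finite.subset hfin Set.diff_subset
      have hddcard : (sVSep M N \ {e}).ncard = (sVSep M N).ncard - 1 :=
        Set.ncard_diff_singleton_of_mem he
      have hc1 : (sVSep M (sVComp Z M)).ncard ≤ k := by
        have h1 := Set.ncard_le_ncard sepMM' hdfin
        rw [hddcard] at h1
        exact h1.trans (le_trans (Nat.sub_le_sub_right hc 1) (le_of_eq (Nat.add_sub_cancel k 1)))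
      have hc2 : (sVSep N (sVComp Z N)).ncard ≤ k := by
        have h1 := Set.ncard_le_ncard sepNN' hdfin
        rw [hddcard] at h1
        exact h1.trans (le_trans (Nat.sub_le_sub_right hc 1) (le_of_eq (Nat.add_sub_cancel k 1)))
      have r1 := ih M (sVComp Z M) hM hM' hc1
      have r2 := ih N (sVComp Z N) hN hN' hc2
      have step : relf L (sVComp Z M) (sVComp Z N) :=
        ⟨hM', hN', Z, hZL, sVLe_comp Z M, sVLe_comp Z N⟩
      exact (r1.trans (Relation.ReflTransGen.single step)).trans (rtg_symm relf_symm r2)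

end AuxCountable

/-- the set of covectors of an FAOM is countable. -/
theorem faom_countable (L : Set (E → SignType)) (hF : isFAOM L) : L.Countable := by
  obtain ⟨⟨hFS, hSE, hP⟩, hS, hZ, hI⟩ := hF
  rcases Set.eq_empty_or_nonempty L with hL | ⟨X₀, hX₀⟩
  · simp [hL]
  obtain ⟨M₀, hM₀, -⟩ := exists_full_ge hFS hZ X₀ hX₀
  -- reachable sets
  let g : ℕ → Set (E → SignType) :=
    fun n => Nat.rec {M₀} (fun _ s => ⋃ M ∈ s, {N | relf L M N}) n
  have hg0 : g 0 = {M₀} := rfl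
  have hgs : ∀ n, g (n + 1) = ⋃ M ∈ g n, {N | relf L M N} := fun _ => rfl
  have hgc : ∀ n, (g n).Countable := by
    intro n
    induction n with
    | zero => exact Set.countable_singleton M₀
    | succ n ih =>
      rw [hgs]
      exact ih.biUnion (fun M _ => nbrs_countable hI hZ M)
  have hgfull : ∀ n, ∀ N ∈ g n, isFull L N := by
    intro n
    induction n with
    | zero =>
      intro N hN
      rw [hg0, Set.mem_singleton_iff] at hN
      rwa [hN]
    | succ n ih =>
      intro N hN
      rw [hgs] at hN
      obtain ⟨M, -, hrel⟩ := Set.mem_iUnion₂.mp hN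
      exact hrel.2.1
  have hreach : ∀ N, Relation.ReflTransGen (relf L) M₀ N → ∃ n, N ∈ g n := by
    intro N h
    induction h with
    | refl => exact ⟨0, by rw [hg0]; exact Set.mem_singleton M₀⟩
    | tail h1 h2 ih =>
      obtain ⟨n, hn⟩ := ih
      exact ⟨n + 1, by rw [hgs]; exact Set.mem_biUnion hn h2⟩
  have hsub : L ⊆ ⋃ N ∈ {N | ∃ n, N ∈ g n}, {Y | Y ∈ L ∧ sVLe Y N} := by
    intro X hX
    obtain ⟨M, hMfull, hle⟩ := exists_full_ge hFS hZ X hX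
    have hR := connect hFS hSE hS (sVSep M₀ M).ncard M₀ M hM₀ hMfull le_rfl
    obtain ⟨n, hn⟩ := hreach M hR
    exact Set.mem_biUnion ⟨n, hn⟩ ⟨hX, hle⟩
  refine Set.Countable.mono hsub ?_
  refine Set.Countable.biUnion ?_ ?_
  · have heq : {N | ∃ n, N ∈ g n} = ⋃ n, g n := by
      ext x; simp
    rw [heq]
    exact Set.countable_iUnion hgc
  · intro N hN
    obtain ⟨n, hn⟩ := hN
    exact (hI N (hgfull n N hn).1).countable
end

section
/- Let E be a set and 𝓛 a nonempty family of finite subsets of E, partially ordered by inclusion, such that: (i) every chain of 𝓛 is finite; (ii) 𝓛 is closed under pairwise intersection (so 𝓛 is a meet-semilattice with meet given by intersection and it has a least element ⊥); (iii) 𝓛 is ranked: for each X ∈ 𝓛 all maximal chains of {Y ∈ 𝓛 | Y ⊆ X} are finite of the same cardinality ρ(X)+1; (iv) for every X ∈ 𝓛 there exists a matroid on the ground set X whose flats are exactly the sets {Y ∈ 𝓛 | Y ⊆ X}; and (v) (GSL2) for every finite set A of atoms of 𝓛 that is independent (i.e., A has a join ∨A in 𝓛 with ρ(∨A) = |A|)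 and every x ∈ 𝓛 with ρ(x) < ρ(∨A), there is a ∈ A with a ⊄ x such that x and a have a common upper bound in 𝓛. Define C := {A ⊆ E finite | ∃X ∈ 𝓛, A ⊆ X}, for A ∈ C let cl(A) be the smallest element of 𝓛 containing A, and rk(A) := ρ(cl(A)). Then (E, C, rk) is a finitary semimatroid: (R1) 0 ≤ rk(A) ≤ |A| for A ∈ C; (R2) A ⊆ B with A,B ∈ C implies rk(A) ≤ rk(B); (R3) A,B ∈ C and A∪B ∈ C imply rk(A) + rk(B) ≥ rk(A∪B) + rk(A∩B); (CR1) A,B ∈ C with rk(A) = rk(A∩B) imply A∪B ∈ C; (CR2) A,B ∈ C with rk(A) < rk(B) imply there is y ∈ B∖A with A∪{y} ∈ C. -/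
open Set

variable {E : Type*}

/-- A maximal chain within a family of sets (ordered by inclusion). -/
def maxChainInSets {α : Type*} (S : Set (Set α)) (c : Set (Set α)) : Prop :=
  c ⊆ S ∧ IsChain (· ⊆ ·) c ∧ ∀ c' ⊆ S, IsChain (· ⊆ ·) c' → c ⊆ c' → c' = c

lemma matroid_flat_closure {α : Type*} (M : Matroid α) (X : Set α) : M.IsFlat (M.closure X) := by
  rw [Matroid.closure_def, sInter_eq_iInter]
  have hne : Nonempty {F // F ∈ {F | M.IsFlat F ∧ X ∩ M.E ⊆ F}} :=
    ⟨⟨M.E, M.ground_isFlat, inter_subset_right⟩⟩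
  exact Matroid.IsFlat.iInter fun F => F.2.1

lemma matroid_closure_subset_flat {α : Type*} {M : Matroid α} {F S : Set α}
    (hF : M.IsFlat F) (h : S ⊆ F) : M.closure S ⊆ F := by
  rw [Matroid.closure_def]
  exact sInter_subset_of_mem ⟨hF, inter_subset_left.trans h⟩

lemma aux_chain (𝓛 : Set (Set E)) (bot : Set E) (hbot : bot ∈ 𝓛)
    (hbotle : ∀ Y ∈ 𝓛, bot ⊆ Y) (X : Set E) (hX : X ∈ 𝓛) (M : Matroid E) (hME : M.E = X)
    (hMf : ∀ F : Set E, M.IsFlat F ↔ (F ∈ 𝓛 ∧ F ⊆ X)) :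
    ∀ (n : ℕ) (Y I : Set E), M.IsFlat Y → M.IsBasis I Y → I.Finite → I.ncard = n →
      ∃ c, maxChainInSets {Z | Z ∈ 𝓛 ∧ Z ⊆ Y} c ∧ c.Finite ∧ c.ncard = n + 1 := by
  intro n
  induction n with
  | zero =>
    intro Y I hYflat hIY hIfin hIcard
    obtain rfl : I = ∅ := (ncard_eq_zero hIfin).1 hIcard
    have hbotX : bot ⊆ X := hbotle X hX
    have hbotflat : M.IsFlat bot := (hMf bot).2 ⟨hbot, hbotX⟩
    have hYbot : Y = bot := by
      refine subset_antisymm (hIY.subset_closure.trans ?_) (hbotle Y ((hMf Y).1 hYflat).1)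
      have h := M.closure_subset_closure (empty_subset bot)
      rwa [hbotflat.closure] at h
    refine ⟨{Y}, ⟨?_, ?_, ?_⟩, finite_singleton _, by simp⟩
    · intro Z hZ
      rw [mem_singleton_iff.1 hZ]
      exact ⟨((hMf Y).1 hYflat).1, Subset.rfl⟩
    · exact Set.Subsingleton.isChain (subsingleton_singleton)
    · intro c' hc'sub _ hsub
      refine subset_antisymm (fun Z hZ => ?_) hsub
      have h1 := (hc'sub hZ).2
      have h2 : bot ⊆ Z := hbotle Z (hc'sub hZ).1
      rw [← hYbot] at h2
      simp [subset_antisymm h1 h2]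
  | succ n ih =>
    intro Y I hYflat hIY hIfin hIcard
    have hIne : I.Nonempty := by
      rw [← ncard_pos hIfin, hIcard]; omega
    obtain ⟨e, he⟩ := hIne
    set I' := I \ {e} with hI'def
    have hI'fin : I'.Finite := hIfin.diff
    have hI'card : I'.ncard = n := by
      rw [hI'def]
      have := ncard_diff_singleton_add_one he hIfin
      omega
    have hI'indep : M.Indep I' := hIY.indep.subset diff_subset
    set Y' := M.closure I' with hY'def
    have hY'flat : M.IsFlat Y' := matroid_flat_closure M I'
    have hI'Y' : M.IsBasis I' Y' := hI'indep.isBasis_closure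
    have hclI : M.closure I = Y := by
      rw [hIY.closure_eq_closure, hYflat.closure]
    have hY'Y : Y' ⊆ Y := by
      rw [← hclI]; exact M.closure_subset_closure diff_subset
    have heY' : e ∉ Y' := hIY.indep.notMem_closure_diff_of_mem he
    have heY : e ∈ Y := hIY.subset he
    have hY𝓛 : Y ∈ 𝓛 := ((hMf Y).1 hYflat).1
    have hY'𝓛 : Y' ∈ 𝓛 := ((hMf Y').1 hY'flat).1
    have hYX : Y ⊆ X := ((hMf Y).1 hYflat).2
    -- cover property
    have cover : ∀ Z, M.IsFlat Z → Y' ⊆ Z → Z ⊆ Y → Z = Y' ∨ Z = Y := by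
      intro Z hZ h1 h2
      by_cases hZY' : Z ⊆ Y'
      · exact Or.inl (subset_antisymm hZY' h1)
      obtain ⟨x, hxZ, hxY'⟩ := not_subset.1 hZY'
      have heZ : e ∈ Z := by
        by_cases hxe : x = e
        · rwa [hxe] at hxZ
        · have hx1 : x ∈ M.closure (insert e I') := by
            have hins : insert e I' = I := by
              rw [hI'def, insert_diff_singleton, insert_eq_self.2 he]
            rw [hins, hclI]; exact h2 hxZ
          have hexch := Matroid.closure_exchange (M := M) (e := x) (f := e) (X := I') ⟨hx1, hxY'⟩
          have hsub : insert x I' ⊆ Z := by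
            refine insert_subset hxZ ?_
            exact ((M.subset_closure I' (by rw [hME]; exact (diff_subset.trans hIY.subset).trans hYX)).trans h1)
          have := matroid_closure_subset_flat hZ hsub
          exact this hexch.1
      have hIZ : I ⊆ Z := by
        intro i hi
        by_cases hie : i = e
        · rwa [hie]
        · exact h1 ((M.subset_closure I' (by rw [hME]; exact (diff_subset.trans hIY.subset).trans hYX)) ⟨hi, hie⟩)
      have hYZ : Y ⊆ Z := by
        rw [← hclI]; exact matroid_closure_subset_flat hZ hIZ
      exact Or.inr (subset_antisymm h2 hYZ)
    obtain ⟨c, hc, hcfin, hccard⟩ := ih Y' I' hY'flat hI'Y' hI'fin hI'card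
    have hcY' : ∀ Z ∈ c, Z ⊆ Y' := fun Z hZ => (hc.1 hZ).2
    -- Y' ∈ c
    have hY'c : Y' ∈ c := by
      have h := hc.2.2 (insert Y' c) ?_ ?_ (subset_insert _ _)
      · rw [← h]; exact mem_insert _ _
      · rintro Z (rfl | hZ)
        · exact ⟨hY'𝓛, Subset.rfl⟩
        · exact hc.1 hZ
      · exact hc.2.1.insert fun Z hZ _ => Or.inr (hcY' Z hZ)
    have hYc : Y ∉ c := fun h => heY' (hcY' Y h heY)
    refine ⟨insert Y c, ⟨?_, ?_, ?_⟩, hcfin.insert _, ?_⟩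
    · rintro Z (rfl | hZ)
      · exact ⟨hY𝓛, Subset.rfl⟩
      · exact ⟨(hc.1 hZ).1, (hcY' Z hZ).trans hY'Y⟩
    · exact hc.2.1.insert fun Z hZ _ => Or.inr ((hcY' Z hZ).trans hY'Y)
    · intro c' hc'sub hc'chain hsub
      refine subset_antisymm (fun Z hZc' => ?_) hsub
      have hZ𝓛 := (hc'sub hZc').1
      have hZY := (hc'sub hZc').2
      have hZflat : M.IsFlat Z := (hMf Z).2 ⟨hZ𝓛, hZY.trans hYX⟩
      have hY'c' : Y' ∈ c' := hsub (mem_insert_of_mem _ hY'c)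
      by_cases hZY'eq : Z = Y'
      · exact mem_insert_of_mem _ (hZY'eq ▸ hY'c)
      rcases hc'chain hZc' hY'c' hZY'eq with h | h
      · -- Z ⊆ Y'
        have : Z ∈ c := by
          have heq := hc.2.2 (insert Z c) ?_ ?_ (subset_insert _ _)
          · rw [← heq]; exact mem_insert _ _
          · rintro W (rfl | hW)
            · exact ⟨hZ𝓛, h⟩
            · exact hc.1 hW
          · refine hc.2.1.insert fun W hW hne => ?_
            exact hc'chain hZc' (hsub (mem_insert_of_mem _ hW)) hne
        exact mem_insert_of_mem _ this
      · -- Y' ⊆ Z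
        rcases cover Z hZflat h hZY with h' | h'
        · exact absurd h' hZY'eq
        · rw [h']; exact mem_insert _ _
    · rw [ncard_insert_of_notMem hYc hcfin, hccard]

lemma aux_rho (𝓛 : Set (Set E)) (bot : Set E) (hbot : bot ∈ 𝓛)
    (hbotle : ∀ Y ∈ 𝓛, bot ⊆ Y) (ρ : Set E → ℕ)
    (hranked : ∀ X ∈ 𝓛, ∀ c, maxChainInSets {Y | Y ∈ 𝓛 ∧ Y ⊆ X} c →
      c.Finite ∧ c.ncard = ρ X + 1)
    (X : Set E) (hX : X ∈ 𝓛) (hXfin : X.Finite) (M : Matroid E) (hME : M.E = X)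
    (hMf : ∀ F : Set E, M.IsFlat F ↔ (F ∈ 𝓛 ∧ F ⊆ X))
    (Y I : Set E) (hY : M.IsFlat Y) (hI : M.IsBasis I Y) : ρ Y = I.ncard := by
  have hIE : I ⊆ X := by have := hI.indep.subset_ground; rwa [hME] at this
  have hIfin : I.Finite := hXfin.subset hIE
  obtain ⟨c, hc, hcfin, hccard⟩ :=
    aux_chain 𝓛 bot hbot hbotle X hX M hME hMf I.ncard Y I hY hI hIfin rfl
  have h := (hranked Y ((hMf Y).1 hY).1 c hc).2
  omega

lemma aux_clo_eq (𝓛 : Set (Set E)) (clo : Set E → Set E)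
    (X : Set E) (hX : X ∈ 𝓛) (M : Matroid E) (hME : M.E = X)
    (hMf : ∀ F : Set E, M.IsFlat F ↔ (F ∈ 𝓛 ∧ F ⊆ X))
    (S : Set E) (hSX : S ⊆ X)
    (hcloS : clo S ∈ 𝓛 ∧ S ⊆ clo S ∧ ∀ Y ∈ 𝓛, S ⊆ Y → clo S ⊆ Y) :
    clo S = M.closure S := by
  have h1 : M.IsFlat (M.closure S) := matroid_flat_closure M S
  have hSE : S ⊆ M.E := by rw [hME]; exact hSX
  have h2 : clo S ⊆ M.closure S :=
    hcloS.2.2 _ ((hMf _).1 h1).1 (M.subset_closure S hSE)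
  have h3 : M.closure S ⊆ clo S :=
    matroid_closure_subset_flat ((hMf _).2 ⟨hcloS.1, hcloS.2.2 X hX hSX⟩) hcloS.2.1
  exact subset_antisymm h2 h3

/-- a geometric semilattice of finite sets gives rise to a
finitary semimatroid. -/
theorem geometric_semilattice_gives_semimatroid (𝓛 : Set (Set E))
    (hne : 𝓛.Nonempty)
    (hfin : ∀ X ∈ 𝓛, X.Finite)
    (hchainfin : ∀ c ⊆ 𝓛, IsChain (· ⊆ ·) c → c.Finite)
    (hmeet : ∀ X ∈ 𝓛, ∀ Y ∈ 𝓛, X ∩ Y ∈ 𝓛)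
    (bot : Set E) (hbot : bot ∈ 𝓛) (hbotle : ∀ Y ∈ 𝓛, bot ⊆ Y)
    (ρ : Set E → ℕ)
    (hranked : ∀ X ∈ 𝓛, ∀ c, maxChainInSets {Y | Y ∈ 𝓛 ∧ Y ⊆ X} c →
      c.Finite ∧ c.ncard = ρ X + 1)
    (hmatroid : ∀ X ∈ 𝓛, ∃ M : Matroid E, M.E = X ∧
      ∀ F : Set E, M.IsFlat F ↔ (F ∈ 𝓛 ∧ F ⊆ X))
    (hGSL2 : ∀ A : Set (Set E), A.Finite →
      (∀ a ∈ A, a ∈ 𝓛 ∧ bot ⊂ a ∧ ∀ z ∈ 𝓛, bot ⊂ z → z ⊆ a → z = a) →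
      ∀ j ∈ 𝓛, (∀ a ∈ A, a ⊆ j) → (∀ u ∈ 𝓛, (∀ a ∈ A, a ⊆ u) → j ⊆ u) →
      ρ j = A.ncard →
      ∀ x ∈ 𝓛, ρ x < ρ j →
        ∃ a ∈ A, ¬ a ⊆ x ∧ ∃ u ∈ 𝓛, x ⊆ u ∧ a ⊆ u)
    (C : Set (Set E)) (hC : C = {A : Set E | A.Finite ∧ ∃ X ∈ 𝓛, A ⊆ X})
    (clo : Set E → Set E)
    (hclo : ∀ A ∈ C, clo A ∈ 𝓛 ∧ A ⊆ clo A ∧ ∀ Y ∈ 𝓛, A ⊆ Y → clo A ⊆ Y)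
    (rk : Set E → ℕ) (hrk : ∀ A ∈ C, rk A = ρ (clo A)) :
    C.Nonempty ∧ (∀ A ∈ C, ∀ B ⊆ A, B ∈ C) ∧
    (∀ A ∈ C, rk A ≤ A.ncard) ∧
    (∀ A ∈ C, ∀ B ∈ C, A ⊆ B → rk A ≤ rk B) ∧
    (∀ A ∈ C, ∀ B ∈ C, A ∪ B ∈ C → rk (A ∪ B) + rk (A ∩ B) ≤ rk A + rk B) ∧
    (∀ A ∈ C, ∀ B ∈ C, rk A = rk (A ∩ B) → A ∪ B ∈ C) ∧
    (∀ A ∈ C, ∀ B ∈ C, rk A < rk B → ∃ y ∈ B \ A, insert y A ∈ C) := by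
  obtain ⟨X0, hX0⟩ := hne
  have hmem : ∀ A ∈ C, A.Finite ∧ ∃ X ∈ 𝓛, A ⊆ X := by
    intro A hA; rw [hC] at hA; exact hA
  have hmem' : ∀ A : Set E, A.Finite → ∀ X ∈ 𝓛, A ⊆ X → A ∈ C := by
    intro A hAfin X hX hAX; rw [hC]; exact ⟨hAfin, X, hX, hAX⟩
  -- the key rank formula
  have key : ∀ A : Set E, A.Finite → ∀ X ∈ 𝓛, A ⊆ X →
      ∀ M : Matroid E, M.E = X → (∀ F : Set E, M.IsFlat F ↔ (F ∈ 𝓛 ∧ F ⊆ X)) →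
      ∀ I : Set E, M.IsBasis I A → rk A = I.ncard := by
    intro A hAfin X hX hAX M hME hMf I hI
    have hAC : A ∈ C := hmem' A hAfin X hX hAX
    have hce : clo A = M.closure A :=
      aux_clo_eq 𝓛 clo X hX M hME hMf A hAX (hclo A hAC)
    have hIc : M.IsBasis I (M.closure A) := hI.isBasis_closure_right
    have hρ : ρ (M.closure A) = I.ncard :=
      aux_rho 𝓛 bot hbot hbotle ρ hranked X hX (hfin X hX) M hME hMf
        (M.closure A) I (matroid_flat_closure M A) hIc
    rw [hrk A hAC, hce, hρ]
  have hdown : ∀ A ∈ C, ∀ B ⊆ A, B ∈ C := by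
    intro A hA B hBA
    obtain ⟨hAfin, X, hX, hAX⟩ := hmem A hA
    exact hmem' B (hAfin.subset hBA) X hX (hBA.trans hAX)
  refine ⟨⟨∅, hmem' ∅ finite_empty X0 hX0 (empty_subset _)⟩, hdown, ?_, ?_, ?_, ?_, ?_⟩
  · -- R1
    intro A hA
    obtain ⟨hAfin, X, hX, hAX⟩ := hmem A hA
    obtain ⟨M, hME, hMf⟩ := hmatroid X hX
    obtain ⟨I, hI⟩ := M.exists_isBasis A (by rw [hME]; exact hAX)
    rw [key A hAfin X hX hAX M hME hMf I hI]
    exact ncard_le_ncard hI.subset hAfin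
  · -- R2
    intro A hA B hB hAB
    obtain ⟨hAfin, _⟩ := hmem A hA
    obtain ⟨hBfin, X, hX, hBX⟩ := hmem B hB
    have hAX : A ⊆ X := hAB.trans hBX
    obtain ⟨M, hME, hMf⟩ := hmatroid X hX
    obtain ⟨I, hI⟩ := M.exists_isBasis A (by rw [hME]; exact hAX)
    obtain ⟨J, hJ, hIJ⟩ := hI.indep.subset_isBasis_of_subset (hI.subset.trans hAB)
      (by rw [hME]; exact hBX)
    rw [key A hAfin X hX hAX M hME hMf I hI, key B hBfin X hX hBX M hME hMf J hJ]
    have hJfin : J.Finite := hBfin.subset hJ.subset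
    exact ncard_le_ncard hIJ hJfin
  · -- R3
    intro A hA B hB hU
    obtain ⟨hAfin, _⟩ := hmem A hA
    obtain ⟨hBfin, _⟩ := hmem B hB
    obtain ⟨hUfin, X, hX, hUX⟩ := hmem (A ∪ B) hU
    have hAX : A ⊆ X := subset_union_left.trans hUX
    have hBX : B ⊆ X := subset_union_right.trans hUX
    have hIXmem : A ∩ B ⊆ X := inter_subset_left.trans hAX
    obtain ⟨M, hME, hMf⟩ := hmatroid X hX
    obtain ⟨I, hI⟩ := M.exists_isBasis (A ∩ B) (by rw [hME]; exact hIXmem)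
    obtain ⟨J, hJ, hIJ⟩ := hI.indep.subset_isBasis_of_subset
      (hI.subset.trans (inter_subset_left.trans subset_union_left))
      (by rw [hME]; exact hUX)
    obtain ⟨KA, hKA, hKAsub⟩ := (hJ.indep.inter_right A).subset_isBasis_of_subset
      inter_subset_right (by rw [hME]; exact hAX)
    obtain ⟨KB, hKB, hKBsub⟩ := (hJ.indep.inter_right B).subset_isBasis_of_subset
      inter_subset_right (by rw [hME]; exact hBX)
    rw [key A hAfin X hX hAX M hME hMf KA hKA, key B hBfin X hX hBX M hME hMf KB hKB,
      key (A ∪ B) hUfin X hX hUX M hME hMf J hJ,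
      key (A ∩ B) (hAfin.inter_of_left B) X hX hIXmem M hME hMf I hI]
    have hJfin : J.Finite := hUfin.subset hJ.subset
    have hJint : J ∩ (A ∩ B) = I :=
      (hI.eq_of_subset_indep (hJ.indep.inter_right _)
        (subset_inter hIJ hI.subset) inter_subset_right).symm
    have h1 : (J ∩ A) ∪ (J ∩ B) = J := by
      rw [← inter_union_distrib_left]; exact inter_eq_self_of_subset_left hJ.subset
    have h2 : (J ∩ A) ∩ (J ∩ B) = I := by
      rw [← hJint]; ext x; simp; tauto
    have h3 := ncard_union_add_ncard_inter (J ∩ A) (J ∩ B)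
      (hJfin.inter_of_left _) (hJfin.inter_of_left _)
    rw [h1, h2] at h3
    have h4 : (J ∩ A).ncard ≤ KA.ncard :=
      ncard_le_ncard hKAsub ((hfin X hX).subset (by rw [← hME]; exact hKA.indep.subset_ground))
    have h5 : (J ∩ B).ncard ≤ KB.ncard :=
      ncard_le_ncard hKBsub ((hfin X hX).subset (by rw [← hME]; exact hKB.indep.subset_ground))
    omega
  · -- CR1
    intro A hA B hB hrkeq
    obtain ⟨hAfin, X, hX, hAX⟩ := hmem A hA
    obtain ⟨hBfin, _⟩ := hmem B hB
    have hABX : A ∩ B ⊆ X := inter_subset_left.trans hAX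
    have hABC : A ∩ B ∈ C := hdown A hA _ inter_subset_left
    obtain ⟨M, hME, hMf⟩ := hmatroid X hX
    obtain ⟨I, hI⟩ := M.exists_isBasis (A ∩ B) (by rw [hME]; exact hABX)
    obtain ⟨J, hJ, hIJ⟩ := hI.indep.subset_isBasis_of_subset
      (hI.subset.trans inter_subset_left) (by rw [hME]; exact hAX)
    have hk1 := key (A ∩ B) (hAfin.inter_of_left B) X hX hABX M hME hMf I hI
    have hk2 := key A hAfin X hX hAX M hME hMf J hJ
    have hJfin : J.Finite := hAfin.subset hJ.subset
    have hIJeq : I = J := eq_of_subset_of_ncard_le hIJ (by omega) hJfin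
    have hcleq : M.closure (A ∩ B) = M.closure A := by
      rw [← hI.closure_eq_closure, ← hJ.closure_eq_closure, hIJeq]
    have hcA : clo A = M.closure A :=
      aux_clo_eq 𝓛 clo X hX M hME hMf A hAX (hclo A hA)
    have hcAB : clo (A ∩ B) = M.closure (A ∩ B) :=
      aux_clo_eq 𝓛 clo X hX M hME hMf (A ∩ B) hABX (hclo (A ∩ B) hABC)
    have hcloeq : clo A = clo (A ∩ B) := by rw [hcA, hcAB, hcleq]
    have hABcloB : clo (A ∩ B) ⊆ clo B :=
      (hclo (A ∩ B) hABC).2.2 _ (hclo B hB).1 (inter_subset_right.trans (hclo B hB).2.1)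
    refine hmem' (A ∪ B) (hAfin.union hBfin) (clo B) (hclo B hB).1 ?_
    exact union_subset ((hclo A hA).2.1.trans (hcloeq.trans_subset hABcloB)) (hclo B hB).2.1
  · -- CR2
    intro A hA B hB hlt
    obtain ⟨hAfin, _⟩ := hmem A hA
    obtain ⟨hBfin, _⟩ := hmem B hB
    have hcB := hclo B hB
    obtain ⟨M, hME, hMf⟩ := hmatroid (clo B) hcB.1
    have hBE : B ⊆ M.E := by rw [hME]; exact hcB.2.1
    obtain ⟨I, hI⟩ := M.exists_isBasis B hBE
    have hIE : I ⊆ M.E := hI.indep.subset_ground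
    have hIfin : I.Finite := (hfin _ hcB.1).subset (by rw [← hME]; exact hIE)
    have hrkB : rk B = I.ncard := key B hBfin (clo B) hcB.1 hcB.2.1 M hME hMf I hI
    have hcloBeq : clo B = M.closure B :=
      aux_clo_eq 𝓛 clo (clo B) hcB.1 M hME hMf B hcB.2.1 hcB
    have hbotflat : M.IsFlat bot := (hMf bot).2 ⟨hbot, hbotle _ hcB.1⟩
    have hbote : bot = M.closure ∅ :=
      subset_antisymm (hbotle _ ((hMf _).1 (matroid_flat_closure M ∅)).1)
        (matroid_closure_subset_flat hbotflat (empty_subset _))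
    set 𝒜 := (fun b => M.closure {b}) '' I with h𝒜
    have hinj : InjOn (fun b => M.closure {b}) I := by
      intro b hb b' hb' hbb'
      by_contra hne'
      have hbb2 : M.closure {b} = M.closure {b'} := hbb'
      have hb'mem : b' ∈ M.closure {b} := by
        rw [hbb2]; exact M.mem_closure_self b' (hIE hb')
      have : b' ∈ M.closure (I \ {b'}) :=
        M.closure_subset_closure (singleton_subset_iff.2 ((mem_diff b).2 ⟨hb, fun h => hne' (mem_singleton_iff.1 h)⟩)) hb'mem
      exact hI.indep.notMem_closure_diff_of_mem hb' this
    have hAcard : 𝒜.ncard = I.ncard := ncard_image_of_injOn hinj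
    have hAfin' : 𝒜.Finite := hIfin.image _
    have hatoms : ∀ a ∈ 𝒜, a ∈ 𝓛 ∧ bot ⊂ a ∧ ∀ z ∈ 𝓛, bot ⊂ z → z ⊆ a → z = a := by
      rintro a ⟨b, hb, rfl⟩
      dsimp only
      have hbE : b ∈ M.E := hIE hb
      have haflat : M.IsFlat (M.closure {b}) := matroid_flat_closure _ _
      have ha𝓛 : M.closure {b} ∈ 𝓛 := ((hMf _).1 haflat).1
      have hba : b ∈ M.closure {b} := M.mem_closure_self b hbE
      have hbnotbot : b ∉ bot := by
        rw [hbote]; intro h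
        exact hI.indep.notMem_closure_diff_of_mem hb
          (M.closure_subset_closure (empty_subset _) h)
      refine ⟨ha𝓛, ssubset_iff_subset_ne.2 ⟨hbotle _ ha𝓛, fun h => hbnotbot (h ▸ hba)⟩, ?_⟩
      intro z hz𝓛 hbotz hza
      have hzflat : M.IsFlat z := (hMf z).2 ⟨hz𝓛,
        hza.trans (by rw [← hME]; exact M.closure_subset_ground _)⟩
      obtain ⟨x, hxz, hxbot⟩ := exists_of_ssubset hbotz
      have hxa : x ∈ M.closure {b} := hza hxz
      have hxcl : x ∉ M.closure ∅ := by rw [← hbote]; exact hxbot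
      have hx1 : x ∈ M.closure (insert b ∅) := by simpa using hxa
      have hexch := Matroid.closure_exchange (M := M) ((mem_diff x).2 ⟨hx1, hxcl⟩)
      have hbz : b ∈ z :=
        matroid_closure_subset_flat hzflat (singleton_subset_iff.2 hxz)
          (by simpa using ((mem_diff b).1 hexch).1)
      exact subset_antisymm hza
        (matroid_closure_subset_flat hzflat (singleton_subset_iff.2 hbz))
    have hub : ∀ a ∈ 𝒜, a ⊆ clo B := by
      rintro a ⟨b, hb, rfl⟩
      dsimp only
      rw [← hME]; exact M.closure_subset_ground _
    have hlub : ∀ u ∈ 𝓛, (∀ a ∈ 𝒜, a ⊆ u) → clo B ⊆ u := by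
      intro u hu hau
      have hIu : I ⊆ u := fun b hb =>
        hau _ ⟨b, hb, rfl⟩ (M.mem_closure_self b (hIE hb))
      have hIC : I ∈ C := hmem' I hIfin (clo B) hcB.1 (by rw [← hME]; exact hIE)
      have hcloIeq : clo I = M.closure I :=
        aux_clo_eq 𝓛 clo (clo B) hcB.1 M hME hMf I (by rw [← hME]; exact hIE) (hclo I hIC)
      have hBI : clo B = clo I := by
        rw [hcloIeq, hI.closure_eq_closure, ← hcloBeq]
      rw [hBI]; exact (hclo I hIC).2.2 u hu hIu
    have hρj : ρ (clo B) = 𝒜.ncard := by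
      rw [hAcard, ← hrkB, hrk B hB]
    have hcA := hclo A hA
    have hρlt : ρ (clo A) < ρ (clo B) := by
      rw [hrk A hA, hrk B hB] at hlt
      exact hlt
    obtain ⟨a, ha𝒜, hnotsub, u, hu, hxu, hau⟩ :=
      hGSL2 𝒜 hAfin' hatoms (clo B) hcB.1 hub hlub hρj (clo A) hcA.1 hρlt
    obtain ⟨b, hb, rfl⟩ := ha𝒜
    have hbE : b ∈ M.E := hIE hb
    have hba : b ∈ M.closure {b} := M.mem_closure_self b hbE
    refine ⟨b, ⟨hI.subset hb, ?_⟩, ?_⟩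
    · intro hbA
      apply hnotsub
      have hbC : ({b} : Set E) ∈ C := hdown A hA {b} (singleton_subset_iff.2 hbA)
      have hclob : clo {b} = M.closure {b} :=
        aux_clo_eq 𝓛 clo (clo B) hcB.1 M hME hMf {b}
          (by rw [← hME]; exact singleton_subset_iff.2 hbE) (hclo {b} hbC)
      show M.closure {b} ⊆ clo A
      rw [← hclob]
      exact (hclo {b} hbC).2.2 _ hcA.1 (singleton_subset_iff.2 (hcA.2.1 hbA))
    · exact hmem' (insert b A) (hAfin.insert b) u hu
        (insert_subset (hau hba) (hcA.2.1.trans hxu))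
end
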